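/- arXiv:2308.14779 — 11 statements merged into one kernel-verified Lean document; each statement's English description precedes it below -/
import Mathlib

section
/- Let ρ ≤ λ be infinite cardinals. Then the Džamonja–Shelah number DS(ρ, λ) equals the meeting number m(ρ, λ). -/
open Cardinal

noncomputable section

/-- The covering number `cov(ρ₁, ρ₂, ρ₃, ρ₄)`: least cardinality of `X ⊆ P_{ρ₂}(ρ₁)`
such that every `b ∈ P_{ρ₃}(ρ₁)` is covered by the union of fewer than `ρ₄` members of `X`. -/
def cov (r1 r2 r3 r4 : Cardinal) : Cardinal :=
  sInf { c | ∃ X : Set (Set r1.out),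
    (∀ x ∈ X, #x < r2) ∧
    (∀ b : Set r1.out, #b < r3 → ∃ Q : Set (Set r1.out), Q ⊆ X ∧ #Q < r4 ∧ b ⊆ ⋃₀ Q) ∧
    #X = c }

/-- The meeting number `m(ρ, λ)`. -/
def meet (ρ lam : Cardinal) : Cardinal :=
  sInf { c | ∃ Q : Set (Set lam.out),
    (∀ q ∈ Q, #q = ρ) ∧
    (∀ b : Set lam.out, #b = ρ → ∃ q ∈ Q, #(↥(b ∩ q)) = ρ) ∧
    #Q = c }

/-- The density number `d(ρ, λ)`. -/
def dens (ρ lam : Cardinal) : Cardinal :=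
  sInf { c | ∃ Q : Set (Set lam.out),
    (∀ q ∈ Q, #q = ρ) ∧
    (∀ b : Set lam.out, #b = ρ → ∃ q ∈ Q, q ⊆ b) ∧
    #Q = c }

/-- `ds(f)` for `f : λ → ρ`. -/
def ds (ρ lam : Cardinal) (f : lam.out → ρ.out) : Cardinal :=
  sInf { c | ∃ Z : Set (Set lam.out),
    (∀ z ∈ Z, #z = ρ) ∧
    (∀ B : Set lam.out, (∀ α : ρ.out, #(↥(B ∩ f ⁻¹' {α})) = lam) →
      ∃ z ∈ Z, #(↥(f '' (z ∩ B))) = ρ) ∧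
    #Z = c }

/-- The Džamonja–Shelah number `DS(ρ, λ) = sup { ds(f) : f : λ → ρ }`. -/
def DS (ρ lam : Cardinal) : Cardinal := ⨆ f : lam.out → ρ.out, ds ρ lam f

/-- Cofinality of a cardinal. -/
def cf (c : Cardinal) : Cardinal := c.ord.cof

/-- `u(σ, λ) = cov(λ, σ, σ, ω)`. -/
def u (σ lam : Cardinal) : Cardinal := cov lam σ σ ℵ₀

/-- The `o`-th iterated cardinal successor of `c`. -/
def succIter (c : Cardinal) (o : Ordinal) : Cardinal :=
  Cardinal.preAleph (Cardinal.preAleph.symm c + o)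

/-! A set `B` meeting every fibre of `f : λ → ρ` contains a transversal `z` of size `ρ`; a
meeting family catches `ρ` points of `z`, which have `ρ` distinct colours, so `ds(f) ≤ m(ρ, λ)`.
Conversely, split `λ` as `(ρ × λ) × λ` and let `f`, `d` be the first two coordinates, so that all
fibres of `(f, d)` have size `λ`. A set `b = {b_α | α < ρ}` of size `ρ` is coded by
`B = {x | d x = b_(f x)}`, which meets every fibre of `f` in `λ` points; if `z` witnesses `ds(f)`
for `B`, then `d '' z` contains `ρ` points of `b`. Hence the sets `d '' z`, padded to size `ρ`,
form a meeting family of size at most `ds(f)`. -/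

universe u

section Cardinal

variable {α : Type u}

theorem Cardinal.mk_union_eq_of_le_of_eq {κ : Cardinal} {s t : Set α} (hκ : ℵ₀ ≤ κ)
    (hs : #s ≤ κ) (ht : #t = κ) : #(s ∪ t : Set α) = κ :=
  le_antisymm ((mk_union_le s t).trans ((add_le_add hs ht.le).trans (add_eq_self hκ).le))
    (ht ▸ mk_le_mk_of_subset Set.subset_union_right)

theorem Cardinal.exists_prod_fibers_mk_eq {R X : Type u} [Nonempty R] (hX : ℵ₀ ≤ #X)
    (hRX : #R ≤ #X) : ∃ g : X → R × X, ∀ p, #(g ⁻¹' {p}) = #X := by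
  have hcard : #((R × X) × X) = #X := by
    simp only [mk_prod, lift_id, mul_eq_right hX hRX (mk_ne_zero R), mul_eq_self hX]
  obtain ⟨e⟩ := Cardinal.eq.mp hcard.symm
  refine ⟨Prod.fst ∘ e, fun p => ?_⟩
  rw [Set.preimage_comp, mk_preimage_equiv, ← Set.prod_univ, mk_setProd, mk_singleton, mk_univ,
    one_mul]

theorem Set.surjOn_univ_of_mk_inter_preimage_eq {β : Type*} {f : α → β} {B : Set α}
    {κ : Cardinal} (hκ : κ ≠ 0) (hB : ∀ b : β, #(↥(B ∩ f ⁻¹' {b})) = κ) :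
    Set.SurjOn f B Set.univ := fun b _ => by
  obtain ⟨⟨x, hxB, hx⟩⟩ := mk_ne_zero_iff.mp ((hB b).trans_ne hκ)
  exact ⟨x, hxB, hx⟩

theorem Cardinal.mk_eq_of_bijOn_univ {β : Type u} {f : α → β} {s : Set α}
    (h : Set.BijOn f s Set.univ) : #s = #β := by
  rw [← mk_univ (α := β)]
  exact mk_congr (h.equiv f)

end Cardinal

section MeetingNumber

variable {ρ lam : Cardinal.{u}}

theorem meet_le_mk {Q : Set (Set lam.out)} (hQ : ∀ q ∈ Q, #q = ρ)
    (hmeets : ∀ b : Set lam.out, #b = ρ → ∃ q ∈ Q, #(↥(b ∩ q)) = ρ) : meet ρ lam ≤ #Q :=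
  csInf_le' ⟨Q, hQ, hmeets, rfl⟩

theorem le_meet {c : Cardinal} (h : ∀ Q : Set (Set lam.out), (∀ q ∈ Q, #q = ρ) →
      (∀ b : Set lam.out, #b = ρ → ∃ q ∈ Q, #(↥(b ∩ q)) = ρ) → c ≤ #Q) : c ≤ meet ρ lam := by
  refine le_csInf ⟨_, {q | #q = ρ}, fun _ hq => hq, fun b hb => ⟨b, hb, ?_⟩, rfl⟩ ?_
  · rwa [Set.inter_self]
  · rintro _ ⟨Q, hQ, hmeets, rfl⟩
    exact h Q hQ hmeets

theorem ds_le_mk {f : lam.out → ρ.out} {Z : Set (Set lam.out)} (hZ : ∀ z ∈ Z, #z = ρ)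
    (hhits : ∀ B : Set lam.out, (∀ α : ρ.out, #(↥(B ∩ f ⁻¹' {α})) = lam) →
      ∃ z ∈ Z, #(↥(f '' (z ∩ B))) = ρ) : ds ρ lam f ≤ #Z :=
  csInf_le' ⟨Z, hZ, hhits, rfl⟩

theorem le_ds {f : lam.out → ρ.out} {c : Cardinal} (hlam : lam ≠ 0)
    (h : ∀ Z : Set (Set lam.out), (∀ z ∈ Z, #z = ρ) →
      (∀ B : Set lam.out, (∀ α : ρ.out, #(↥(B ∩ f ⁻¹' {α})) = lam) →
        ∃ z ∈ Z, #(↥(f '' (z ∩ B))) = ρ) → c ≤ #Z) : c ≤ ds ρ lam f := by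
  refine le_csInf ⟨_, {z | #z = ρ}, fun _ hz => hz, fun B hB => ?_, rfl⟩ ?_
  · -- a transversal of `f` inside `B` has size `ρ`, and so has its image
    obtain ⟨z, hzB, hz⟩ := (Set.surjOn_univ_of_mk_inter_preimage_eq hlam hB).exists_bijOn_subset
    have hzρ : #z = ρ := (mk_eq_of_bijOn_univ hz).trans (mk_out ρ)
    refine ⟨z, hzρ, ?_⟩
    rw [Set.inter_eq_self_of_subset_left hzB]
    exact (mk_image_eq_of_injOn f z hz.injOn).trans hzρ
  · rintro _ ⟨Z, hZ, hhits, rfl⟩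
    exact h Z hZ hhits

theorem ds_le_meet (hlam : lam ≠ 0) (f : lam.out → ρ.out) : ds ρ lam f ≤ meet ρ lam := by
  refine le_meet fun Q hQ hmeets => ds_le_mk hQ fun B hB => ?_
  obtain ⟨z, hzB, hz⟩ := (Set.surjOn_univ_of_mk_inter_preimage_eq hlam hB).exists_bijOn_subset
  obtain ⟨q, hq, hzq⟩ := hmeets z ((mk_eq_of_bijOn_univ hz).trans (mk_out ρ))
  refine ⟨q, hq, le_antisymm ((mk_set_le _).trans_eq (mk_out ρ)) ?_⟩
  calc ρ = #(↥(z ∩ q)) := hzq.symm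
    _ = #(↥(f '' (z ∩ q))) := (mk_image_eq_of_injOn _ _ (hz.injOn.mono Set.inter_subset_left)).symm
    _ ≤ #(↥(f '' (q ∩ B))) := mk_le_mk_of_subset (Set.image_mono fun x hx => ⟨hx.2, hzB hx.1⟩)

theorem meet_le_ds_fst (hρ : ℵ₀ ≤ ρ) (hle : ρ ≤ lam) {g : lam.out → ρ.out × lam.out}
    (hg : ∀ p, #(g ⁻¹' {p}) = lam) : meet ρ lam ≤ ds ρ lam (Prod.fst ∘ g) := by
  obtain ⟨j⟩ : Nonempty (ρ.out ↪ lam.out) := by rwa [← le_def, mk_out, mk_out]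
  have hS : #(Set.range j) = ρ := by rw [mk_range_eq _ j.injective, mk_out]
  refine le_ds (aleph0_pos.trans_le (hρ.trans hle)).ne' fun Z hZ hhits => ?_
  -- padding with `range j` makes every member of the family have size exactly `ρ`
  let pad (z : Set lam.out) : Set lam.out := (Prod.snd ∘ g) '' z ∪ Set.range j
  refine (meet_le_mk (Q := pad '' Z) ?_ fun b hb => ?_).trans mk_image_le
  · rintro _ ⟨z, hz, rfl⟩
    exact mk_union_eq_of_le_of_eq hρ (mk_image_le.trans (hZ z hz).le) hS
  obtain ⟨i⟩ : Nonempty (ρ.out ≃ b) := Cardinal.eq.mp (by rw [mk_out, hb])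
  -- `B` codes the enumeration `i` of `b`: its points have second coordinate `i` of the first
  let B : Set lam.out := {x | (g x).2 = i (g x).1}
  have hB : ∀ α, #(↥(B ∩ (Prod.fst ∘ g) ⁻¹' {α})) = lam := fun α => by
    convert hg (α, i α) using 3
    ext x
    simp only [B, Set.mem_inter_iff, Set.mem_ofPred_eq, Set.mem_preimage, Function.comp_apply,
      Set.mem_singleton_iff, Prod.ext_iff]
    grind
  obtain ⟨z, hz, hzB⟩ := hhits B hB
  refine ⟨pad z, ⟨z, hz, rfl⟩,
    le_antisymm ((mk_le_mk_of_subset Set.inter_subset_left).trans_eq hb) ?_⟩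
  calc ρ = #(↥((Subtype.val ∘ i) '' ((Prod.fst ∘ g) '' (z ∩ B)))) :=
        ((mk_image_eq (Subtype.val_injective.comp i.injective)).trans hzB).symm
    _ ≤ #(↥(b ∩ pad z)) := by
      refine mk_le_mk_of_subset ?_
      rintro _ ⟨_, ⟨x, ⟨hxz, hxB⟩, rfl⟩, rfl⟩
      exact ⟨(i _).2, Or.inl ⟨x, hxz, hxB⟩⟩

end MeetingNumber

theorem stmt0 (ρ lam : Cardinal) (hρ : ℵ₀ ≤ ρ) (hle : ρ ≤ lam) :
    DS ρ lam = meet ρ lam := by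
  have hlam : ℵ₀ ≤ lam := hρ.trans hle
  have := nonempty_out (aleph0_pos.trans_le hρ).ne'
  refine le_antisymm (ciSup_le fun f => ds_le_meet (aleph0_pos.trans_le hlam).ne' f) ?_
  obtain ⟨g, hg⟩ := exists_prod_fibers_mk_eq (R := ρ.out) (X := lam.out) (by rwa [mk_out])
    (by rwa [mk_out, mk_out])
  rw [mk_out] at hg
  exact (meet_le_ds_fst hρ hle hg).trans (le_ciSup bddAbove_of_small _)
end
end

section
/- Let ρ ≤ λ be infinite cardinals. For every f : λ → ρ, ds(f) ≤ m(ρ, λ). -/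
open Cardinal

noncomputable section

/-!
If every fibre of `f` meets `B`, pick one point of `B` in each fibre. The resulting
transversal `b ⊆ B` has size `ρ` and `f` is injective on it, so a member `q` of a meeting family
with `|b ∩ q| = ρ` already satisfies `|f''(q ∩ B)| ≥ |f''(b ∩ q)| = ρ`. Hence every meeting family
witnesses `ds(f)`.
-/

universe v

open Set

lemma mk_inter_le_mk_image_inter {α β : Type v} {f : α → β} {b B : Set α} (hbB : b ⊆ B)
    (hb : InjOn f b) (q : Set α) : #↥(b ∩ q) ≤ #↥(f '' (q ∩ B)) :=
  calc #↥(b ∩ q) = #↥(f '' (b ∩ q)) := (mk_image_eq_of_injOn f _ (hb.mono inter_subset_left)).symm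
    _ ≤ #↥(f '' (q ∩ B)) :=
      mk_le_mk_of_subset (image_mono fun _ ⟨hxb, hxq⟩ => ⟨hxq, hbB hxb⟩)

lemma exists_transversal_subset {α β : Type v} {f : α → β} {B : Set α}
    (hB : ∀ y, (B ∩ f ⁻¹' {y}).Nonempty) : ∃ b ⊆ B, InjOn f b ∧ #b = #β := by
  have hsurj : f '' B = Set.univ := eq_univ_of_forall fun y =>
    let ⟨x, hxB, hxy⟩ := hB y; ⟨x, hxB, hxy⟩
  obtain ⟨b, hbB, hbij⟩ := exists_subset_bijOn B f
  refine ⟨b, hbB, hbij.injOn, ?_⟩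
  rw [← mk_image_eq_of_injOn f b hbij.injOn, hbij.image_eq, hsurj, mk_univ]

lemma ds_le_mk_of_meeting {ρ lam : Cardinal} (hle : ρ ≤ lam) (f : lam.out → ρ.out)
    {Q : Set (Set lam.out)} (hQρ : ∀ q ∈ Q, #q = ρ)
    (hQ : ∀ b : Set lam.out, #b = ρ → ∃ q ∈ Q, #↥(b ∩ q) = ρ) : ds ρ lam f ≤ #Q := by
  refine csInf_le' ⟨Q, hQρ, fun B hB => ?_, rfl⟩
  have hfibre : ∀ α, (B ∩ f ⁻¹' {α}).Nonempty := fun α => by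
    have hρ : ρ ≠ 0 := mk_out ρ ▸ mk_ne_zero_iff.mpr ⟨α⟩
    rw [← nonempty_coe_sort, ← mk_ne_zero_iff, hB α]
    exact ne_bot_of_le_ne_bot hρ hle
  obtain ⟨b, hbB, hinj, hbρ⟩ := exists_transversal_subset hfibre
  obtain ⟨q, hqQ, hq⟩ := hQ b (hbρ.trans (mk_out ρ))
  refine ⟨q, hqQ, le_antisymm ?_ ?_⟩
  · exact (mk_set_le _).trans (mk_out ρ).le
  · exact hq ▸ mk_inter_le_mk_image_inter hbB hinj q

theorem stmt1_general (ρ lam : Cardinal) (hle : ρ ≤ lam)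
    (f : lam.out → ρ.out) : ds ρ lam f ≤ meet ρ lam := by
  -- `meet` is an infimum, so a meeting family must exist (`sInf ∅ = 0`); all `ρ`-subsets form one.
  refine le_csInf ⟨_, {q | #q = ρ}, fun _ hq => hq,
    fun b hb => ⟨b, hb, by rwa [inter_self]⟩, rfl⟩ ?_
  rintro _ ⟨Q, hQρ, hQ, rfl⟩
  exact ds_le_mk_of_meeting hle f hQρ hQ

theorem stmt1 (ρ lam : Cardinal) (hρ : ℵ₀ ≤ ρ) (hle : ρ ≤ lam)
    (f : lam.out → ρ.out) : ds ρ lam f ≤ meet ρ lam :=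
  stmt1_general ρ lam hle f
end
end

section
/- Let σ, ρ, λ be infinite cardinals with σ ≤ cf(ρ). Then m(ρ, λ) ≤ cov(λ, ρ⁺, ρ⁺, σ). -/
open Cardinal

noncomputable section

theorem stmt3 (σ ρ lam : Cardinal) (hσ : ℵ₀ ≤ σ) (hρ : ℵ₀ ≤ ρ) (hlam : ℵ₀ ≤ lam)
    (h : σ ≤ cf ρ) : meet ρ lam ≤ cov lam (Order.succ ρ) (Order.succ ρ) σ := by
  -- The cov set is nonempty
  have hne : { c | ∃ X : Set (Set lam.out),
      (∀ x ∈ X, #x < Order.succ ρ) ∧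
      (∀ b : Set lam.out, #b < Order.succ ρ → ∃ Q : Set (Set lam.out), Q ⊆ X ∧ #Q < σ ∧ b ⊆ ⋃₀ Q) ∧
      #X = c }.Nonempty := by
    refine ⟨_, {s | #s < Order.succ ρ}, fun x hx => hx, fun b hb => ⟨{b}, ?_, ?_, ?_⟩, rfl⟩
    · intro x hx; simp at hx; exact hx ▸ hb
    · simpa using lt_of_lt_of_le one_lt_aleph0 hσ
    · simp
  obtain ⟨X, hX1, hX2, hX3⟩ := csInf_mem hne
  rw [cov, ← hX3]
  -- candidate set for meet
  set Q' : Set (Set lam.out) := {x | x ∈ X ∧ #x = ρ} with hQ'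
  have key : ∀ b : Set lam.out, #b = ρ → ∃ q ∈ Q', #(↥(b ∩ q)) = ρ := by
    intro b hb
    obtain ⟨Qc, hQX, hQσ, hcov⟩ := hX2 b (hb ▸ Order.lt_succ ρ)
    by_contra hcon
    push_neg at hcon
    -- every piece b ∩ x for x ∈ Qc has size < ρ
    have hsmall : ∀ x : Qc, #(↥(b ∩ (x : Set lam.out))) < ρ := by
      rintro ⟨x, hx⟩
      have hle : #(↥(b ∩ x)) ≤ ρ := by
        have := Cardinal.mk_le_mk_of_subset (Set.inter_subset_left (s := b) (t := x))
        exact hb ▸ this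
      rcases lt_or_eq_of_le hle with h1 | h1
      · exact h1
      · exfalso
        have hxρ : #x = ρ := by
          have h2 : #x ≤ ρ := Order.lt_succ_iff.mp (hX1 x (hQX hx))
          have h3 : ρ ≤ #x := h1 ▸ Cardinal.mk_le_mk_of_subset (Set.inter_subset_right (s := b) (t := x))
          exact le_antisymm h2 h3
        exact hcon x ⟨hQX hx, hxρ⟩ h1
    have hQcf : #Qc < ρ.ord.cof := lt_of_lt_of_le hQσ h
    have hsup : (⨆ x : Qc, #(↥(b ∩ (x : Set lam.out)))) < ρ := Ordinal.iSup_lt hQcf hsmall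
    have hsub : b ⊆ ⋃ x : Qc, (b ∩ (x : Set lam.out)) := by
      intro a ha
      obtain ⟨x, hxQ, hax⟩ := hcov ha
      exact Set.mem_iUnion.2 ⟨⟨x, hxQ⟩, ha, hax⟩
    have hbig : #b ≤ #Qc * ⨆ x : Qc, #(↥(b ∩ (x : Set lam.out))) :=
      (Cardinal.mk_le_mk_of_subset hsub).trans (Cardinal.mk_iUnion_le _)
    have : ρ < ρ := lt_of_le_of_lt (hb ▸ hbig)
      (Cardinal.mul_lt_of_lt hρ (lt_of_lt_of_le hQcf (Ordinal.cof_ord_le ρ)) hsup)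
    exact lt_irrefl _ this
  have hmem : #Q' ∈ { c | ∃ Q : Set (Set lam.out),
      (∀ q ∈ Q, #q = ρ) ∧
      (∀ b : Set lam.out, #b = ρ → ∃ q ∈ Q, #(↥(b ∩ q)) = ρ) ∧
      #Q = c } := ⟨Q', fun q hq => hq.2, key, rfl⟩
  exact (csInf_le' hmem).trans (Cardinal.mk_le_mk_of_subset fun x hx => hx.1)
end
end

section
/- Let ρ ≤ λ be infinite cardinals. Then m(ρ, λ⁺) = max{λ⁺, m(ρ, λ)}. -/
open Cardinal

noncomputable section

/-!
The lower bound `λ⁺ ≤ m(ρ, λ⁺)` holds because the members of a meeting family must cover all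
but fewer than `ρ` points, and `m(ρ, λ) ≤ m(ρ, λ⁺)` because meeting families pull back along
injections. For the upper bound, well-order `λ⁺` in type `λ⁺`: as `ρ < cf λ⁺`, every `ρ`-sized
set lies in a proper initial segment, which has size at most `λ`, so the union over the `λ⁺`
initial segments of copies of one optimal meeting family on `λ` is a meeting family on `λ⁺`.
-/

universe v

open Set Ordinal

section MeetingNumber

variable {α β : Type v} {ρ : Cardinal.{v}}

def IsMeetingFamily (ρ : Cardinal.{v}) (Q : Set (Set α)) : Prop :=
  (∀ q ∈ Q, #q = ρ) ∧ ∀ b : Set α, #b = ρ → ∃ q ∈ Q, #↥(b ∩ q) = ρ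

def meetingNumber (ρ : Cardinal.{v}) (α : Type v) : Cardinal.{v} :=
  sInf {c | ∃ Q : Set (Set α), IsMeetingFamily ρ Q ∧ #Q = c}

theorem meet_eq_meetingNumber (ρ lam : Cardinal.{v}) :
    meet ρ lam = meetingNumber ρ lam.out := by
  simp only [meet, meetingNumber, IsMeetingFamily, and_assoc]

theorem isMeetingFamily_setOf_mk_eq : IsMeetingFamily ρ {q : Set α | #q = ρ} :=
  ⟨fun _ hq => hq, fun b hb => ⟨b, hb, by rwa [inter_self]⟩⟩

theorem meetingNumber_le {Q : Set (Set α)} (hQ : IsMeetingFamily ρ Q) :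
    meetingNumber ρ α ≤ #Q :=
  csInf_le' ⟨Q, hQ, rfl⟩

theorem exists_isMeetingFamily_mk_eq_meetingNumber (ρ : Cardinal.{v}) (α : Type v) :
    ∃ Q : Set (Set α), IsMeetingFamily ρ Q ∧ #Q = meetingNumber ρ α := by
  have hne : {c | ∃ Q : Set (Set α), IsMeetingFamily ρ Q ∧ #Q = c}.Nonempty :=
    ⟨_, _, isMeetingFamily_setOf_mk_eq, rfl⟩
  exact csInf_mem hne

theorem IsMeetingFamily.preimage {Q : Set (Set β)} (hQ : IsMeetingFamily ρ Q) (f : α ↪ β) :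
    IsMeetingFamily ρ ((f ⁻¹' ·) '' {q ∈ Q | #↥(f ⁻¹' q) = ρ}) := by
  refine ⟨?_, fun b hb => ?_⟩
  · rintro _ ⟨q, hq, rfl⟩
    exact hq.2
  obtain ⟨q, hqQ, hq⟩ := hQ.2 (f '' b) (by rw [mk_image_eq f.injective, hb])
  have hmeet : #↥(b ∩ f ⁻¹' q) = ρ := by
    rw [← preimage_image_eq b f.injective, ← preimage_inter,
      mk_preimage_of_injective_of_subset_range _ _ f.injective
        (inter_subset_left.trans (image_subset_range _ _)), hq]
  have htrace : #↥(f ⁻¹' q) = ρ :=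
    le_antisymm ((mk_preimage_of_injective _ _ f.injective).trans_eq (hQ.1 q hqQ))
      (hmeet ▸ mk_le_mk_of_subset inter_subset_right)
  exact ⟨_, ⟨q, ⟨hqQ, htrace⟩, rfl⟩, hmeet⟩

theorem meetingNumber_le_of_embedding (f : α ↪ β) :
    meetingNumber ρ α ≤ meetingNumber ρ β := by
  obtain ⟨Q, hQ, hcard⟩ := exists_isMeetingFamily_mk_eq_meetingNumber ρ β
  calc meetingNumber ρ α ≤ _ := meetingNumber_le (hQ.preimage f)
    _ ≤ #{q ∈ Q | #↥(f ⁻¹' q) = ρ} := mk_image_le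
    _ ≤ #Q := mk_le_mk_of_subset (sep_subset _ _)
    _ = meetingNumber ρ β := hcard

theorem meetingNumber_congr (e : α ≃ β) : meetingNumber ρ α = meetingNumber ρ β :=
  le_antisymm (meetingNumber_le_of_embedding e.toEmbedding)
    (meetingNumber_le_of_embedding e.symm.toEmbedding)

theorem IsMeetingFamily.mk_compl_sUnion_lt {Q : Set (Set α)} (hQ : IsMeetingFamily ρ Q)
    (hρ : ρ ≠ 0) : #↥(⋃₀ Q)ᶜ < ρ := by
  by_contra! hcompl
  obtain ⟨t, ht⟩ := le_mk_iff_exists_set.1 hcompl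
  obtain ⟨q, hqQ, hq⟩ := hQ.2 (Subtype.val '' t) (by rw [mk_image_eq Subtype.val_injective, ht])
  have hdisj : Subtype.val '' t ∩ q = ∅ := by
    refine eq_empty_of_forall_notMem ?_
    rintro _ ⟨⟨y, -, rfl⟩, hyq⟩
    exact y.2 (subset_sUnion_of_mem hqQ hyq)
  rw [hdisj, mk_eq_zero] at hq
  exact hρ hq.symm

theorem mk_le_meetingNumber (hρ : ℵ₀ ≤ ρ) (hα : ρ < #α) : #α ≤ meetingNumber ρ α := by
  obtain ⟨Q, hQ, hcard⟩ := exists_isMeetingFamily_mk_eq_meetingNumber ρ α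
  rw [← hcard]
  by_contra! hQα
  have hα₀ : ℵ₀ ≤ #α := hρ.trans hα.le
  have hunion : #↥(⋃₀ Q) < #α := by
    refine (mk_sUnion_le Q).trans_lt (mul_lt_of_lt hα₀ hQα ?_)
    exact (ciSup_le' fun q : Q => (hQ.1 q q.2).le).trans_lt hα
  have hcompl := hQ.mk_compl_sUnion_lt (aleph0_pos.trans_le hρ).ne'
  have : #α < #α :=
    calc #α = #↥(⋃₀ Q) + #↥(⋃₀ Q)ᶜ := (mk_sum_compl _).symm
      _ < #α := add_lt_of_lt hα₀ hunion (hcompl.trans hα)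
  exact this.false

theorem meetingNumber_le_mul_of_cover {ι : Type v} (A : ι → Set α)
    (hA : ∀ b : Set α, #b = ρ → ∃ i, b ⊆ A i) {c : Cardinal.{v}}
    (hc : ∀ i, meetingNumber ρ (A i) ≤ c) : meetingNumber ρ α ≤ #ι * c := by
  choose Q hQ hcard using fun i => exists_isMeetingFamily_mk_eq_meetingNumber ρ (A i)
  have hfamily : IsMeetingFamily ρ (⋃ i, (Subtype.val '' ·) '' Q i) := by
    refine ⟨?_, fun b hb => ?_⟩
    · simp only [mem_iUnion, mem_image]
      rintro _ ⟨i, q, hq, rfl⟩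
      rw [mk_image_eq Subtype.val_injective, (hQ i).1 q hq]
    obtain ⟨i, hbi⟩ := hA b hb
    have hb' : #↥(Subtype.val ⁻¹' b : Set (A i)) = ρ := by
      rwa [mk_preimage_of_injective_of_subset_range _ _ Subtype.val_injective
        (by rwa [Subtype.range_coe])]
    obtain ⟨q, hqQ, hq⟩ := (hQ i).2 _ hb'
    refine ⟨_, mem_iUnion.2 ⟨i, q, hqQ, rfl⟩, ?_⟩
    rwa [← image_preimage_inter, mk_image_eq Subtype.val_injective]
  calc meetingNumber ρ α ≤ _ := meetingNumber_le hfamily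
    _ ≤ #ι * ⨆ i, #↥((Subtype.val '' ·) '' Q i) := mk_iUnion_le _
    _ ≤ #ι * c := by
      gcongr
      exact ciSup_le' fun i => mk_image_le.trans ((hcard i).trans_le (hc i))

/-- Along an initial well-order, every set of size `ρ < cf α` lies in a proper initial segment. -/
theorem meetingNumber_le_mul_of_ord_eq_type [LinearOrder α] [WellFoundedLT α]
    (hα : (#α).ord = typeLT α) (hρ : ρ < Order.cof α) {c : Cardinal.{v}}
    (hc : ∀ β : Type v, #β < #α → meetingNumber ρ β ≤ c) : meetingNumber ρ α ≤ #α * c := by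
  have hbounded (b : Set α) (hb : #b = ρ) : ∃ x, b ⊆ Iio x :=
    not_isCofinal_iff.1 fun hcof => (hb ▸ hρ).not_ge (Order.cof_le hcof)
  exact meetingNumber_le_mul_of_cover _ hbounded fun x => hc _ (mk_Iio_lt x hα)

end MeetingNumber

theorem stmt5 (ρ lam : Cardinal) (hρ : ℵ₀ ≤ ρ) (hle : ρ ≤ lam) :
    meet ρ (Order.succ lam) = max (Order.succ lam) (meet ρ lam) := by
  have hlam : ℵ₀ ≤ lam := hρ.trans hle
  have hlt : lam < Order.succ lam := Order.lt_succ lam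
  have hcard : #(Order.succ lam).ord.ToType = Order.succ lam := by simp
  obtain ⟨e⟩ : Nonempty ((Order.succ lam).out ≃ (Order.succ lam).ord.ToType) :=
    Cardinal.eq.1 (by rw [mk_out, hcard])
  rw [meet_eq_meetingNumber, meet_eq_meetingNumber, meetingNumber_congr e]
  refine le_antisymm ?_ (max_le ?_ ?_)
  · calc _ ≤ #(Order.succ lam).ord.ToType * meetingNumber ρ lam.out := by
          refine meetingNumber_le_mul_of_ord_eq_type (by simp) ?_ fun β hβ => ?_
          · rw [Ordinal.cof_toType, (isRegular_succ hlam).cof_ord]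
            exact hle.trans_lt hlt
          · rw [hcard, Order.lt_succ_iff, ← mk_out lam, le_def] at hβ
            exact meetingNumber_le_of_embedding hβ.some
      _ = Order.succ lam * meetingNumber ρ lam.out := by rw [hcard]
      _ ≤ _ := mul_le_max_of_aleph0_le_left (hlam.trans hlt.le)
  · exact hcard.symm.trans_le (mk_le_meetingNumber hρ (by rw [hcard]; exact hle.trans_lt hlt))
  · obtain ⟨f⟩ : Nonempty (lam.out ↪ (Order.succ lam).ord.ToType) := by
      rw [← le_def, mk_out, hcard]
      exact hlt.le
    exact meetingNumber_le_of_embedding f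
end
end

section
/- Let ρ₁ be an infinite cardinal and ρ₃, ρ₄ be cardinals with ρ₁⁺ ≥ ρ₁, ω ≤ ρ₃ ≤ ρ₁⁺ and 2 ≤ ρ₄ ≤ ρ₃. If either cf(ρ₁) < ρ₄ or cf(ρ₁) ≥ ρ₃, then cov(ρ₁, ρ₁, ρ₃, ρ₄) = cf(ρ₁). -/
open Cardinal

noncomputable section

/-!
Fix a well-order of `ρ₁` of type `ρ₁.ord` and a cofinal set `S` of size `cf ρ₁`. The initial
segments `Iic a`, `a ∈ S`, have size `< ρ₁`; if `cf ρ₁ < ρ₄` all of them together cover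
everything, and if `ρ₃ ≤ cf ρ₁` every `b` of size `< ρ₃` is bounded, hence lies in one of them.
Conversely a covering family covers every singleton, so its union is all of `ρ₁`; fewer than
`cf ρ₁` sets of size `< ρ₁` cannot have union of size `ρ₁`.
-/

open Cardinal Set Order
open scoped Ordinal

universe u

section Covering

variable {α : Type u} {r2 r3 r4 : Cardinal.{u}} {X : Set (Set α)}

def IsCovering (r2 r3 r4 : Cardinal.{u}) (X : Set (Set α)) : Prop :=
  (∀ x ∈ X, #x < r2) ∧ ∀ b : Set α, #b < r3 → ∃ Q ⊆ X, #Q < r4 ∧ b ⊆ ⋃₀ Q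

theorem cov_le {r1 : Cardinal.{u}} {X : Set (Set r1.out)} (hX : IsCovering r2 r3 r4 X) :
    cov r1 r2 r3 r4 ≤ #X :=
  csInf_le' ⟨X, hX.1, hX.2, rfl⟩

theorem le_cov {r1 c : Cardinal.{u}} (hne : ∃ X : Set (Set r1.out), IsCovering r2 r3 r4 X)
    (h : ∀ X : Set (Set r1.out), IsCovering r2 r3 r4 X → c ≤ #X) : c ≤ cov r1 r2 r3 r4 := by
  obtain ⟨X, hX⟩ := hne
  refine le_csInf ⟨#X, X, hX.1, hX.2, rfl⟩ ?_
  rintro _ ⟨Y, hY, hY', rfl⟩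
  exact h Y ⟨hY, hY'⟩

theorem IsCovering.sUnion_eq_univ (hX : IsCovering r2 r3 r4 X) (h3 : 1 < r3) :
    ⋃₀ X = Set.univ := by
  refine eq_univ_of_forall fun x => ?_
  obtain ⟨Q, hQX, -, hxQ⟩ := hX.2 {x} (by rwa [mk_singleton])
  obtain ⟨q, hq, hxq⟩ := hxQ (mem_singleton x)
  exact ⟨q, hQX hq, hxq⟩

theorem Cardinal.mk_sUnion_lt_of_lt_cof {Y : Set (Set α)} {c : Cardinal.{u}} (hc : ℵ₀ ≤ c)
    (hY : #Y < c.ord.cof) (hs : ∀ s ∈ Y, #s < c) : #(⋃₀ Y) < c :=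
  (mk_sUnion_le Y).trans_lt <|
    mul_lt_of_lt hc (hY.trans_le (Ordinal.cof_ord_le c))
      (iSup_lt_of_lt_cof_ord hY fun s => hs s s.2)

theorem IsCovering.cof_ord_mk_le (hX : IsCovering r2 r3 r4 X) (hα : ℵ₀ ≤ #α) (h2 : r2 ≤ #α)
    (h3 : 1 < r3) : (#α).ord.cof ≤ #X := by
  by_contra! hlt
  have hunion := mk_sUnion_lt_of_lt_cof hα hlt fun x hx => (hX.1 x hx).trans_le h2
  rw [hX.sUnion_eq_univ h3, mk_univ] at hunion
  exact hunion.false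

end Covering

section WellOrder

variable {α : Type u}

theorem IsCofinal.sUnion_image_Iic [Preorder α] {S : Set α} (hS : IsCofinal S) :
    ⋃₀ (Iic '' S) = Set.univ :=
  eq_univ_of_forall fun x =>
    let ⟨a, haS, hxa⟩ := hS x
    ⟨Iic a, mem_image_of_mem _ haS, hxa⟩

variable [LinearOrder α]

theorem IsCofinal.exists_subset_Iic_of_mk_lt_cof {S : Set α} (hS : IsCofinal S) {b : Set α}
    (hb : #b < Order.cof α) : ∃ a ∈ S, b ⊆ Iic a := by
  obtain ⟨x, hx⟩ := not_isCofinal_iff.1 fun hc => (cof_le hc).not_gt hb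
  obtain ⟨a, haS, hxa⟩ := hS x
  exact ⟨a, haS, fun y hy => ((hx y hy).trans_le hxa).le⟩

variable [WellFoundedLT α]

theorem mk_Iic_lt (hα : ℵ₀ ≤ #α) (h : ord #α = typeLT α) (a : α) : #(Iic a) < #α := by
  rw [← Iio_insert]
  exact mk_insert_le.trans_lt (add_lt_of_lt hα (mk_Iio_lt a h) (one_lt_aleph0.trans_le hα))

theorem exists_isCovering_mk_le_cof (hα : ℵ₀ ≤ #α) (h : ord #α = typeLT α)
    {r3 r4 : Cardinal.{u}} (h4 : 1 < r4) (hcof : Order.cof α < r4 ∨ r3 ≤ Order.cof α) :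
    ∃ X : Set (Set α), IsCovering (#α) r3 r4 X ∧ #X ≤ Order.cof α := by
  obtain ⟨S, hS, hSc⟩ := exists_cof_eq α
  refine ⟨Iic '' S, ⟨?_, fun b hb => ?_⟩, mk_image_le.trans hSc.le⟩
  · rintro _ ⟨a, -, rfl⟩
    exact mk_Iic_lt hα h a
  rcases hcof with hlt | hle
  · refine ⟨Iic '' S, subset_rfl, mk_image_le.trans_lt (hSc.trans_lt hlt), ?_⟩
    rw [hS.sUnion_image_Iic]
    exact subset_univ b
  · obtain ⟨a, haS, hba⟩ := hS.exists_subset_Iic_of_mk_lt_cof (hb.trans_le hle)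
    refine ⟨{Iic a}, singleton_subset_iff.2 (mem_image_of_mem _ haS), ?_, ?_⟩
    · rwa [mk_singleton]
    · rwa [sUnion_singleton]

end WellOrder

theorem stmt7_general (r1 r3 r4 : Cardinal) (h1 : ℵ₀ ≤ r1)
    (h3 : ℵ₀ ≤ r3) (h4 : 2 ≤ r4)
    (h : cf r1 < r4 ∨ r3 ≤ cf r1) :
    cov r1 r1 r3 r4 = cf r1 := by
  obtain ⟨_, _, hord⟩ := exists_ord_eq_type_lt r1.out
  have hα : ℵ₀ ≤ #r1.out := by rwa [mk_out]
  have hcf : cf r1 = Order.cof r1.out := by rw [← Ordinal.cof_type, ← hord, mk_out]; rfl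
  obtain ⟨X, hX, hXc⟩ :=
    exists_isCovering_mk_le_cof hα hord (Cardinal.one_lt_two.trans_le h4) (hcf ▸ h)
  rw [mk_out] at hX
  refine le_antisymm ((cov_le hX).trans (hcf ▸ hXc)) (le_cov ⟨X, hX⟩ fun Y hY => ?_)
  have hcfY := hY.cof_ord_mk_le hα (mk_out r1).ge (one_lt_aleph0.trans_le h3)
  rwa [mk_out] at hcfY

theorem stmt7 (r1 r3 r4 : Cardinal) (h1 : ℵ₀ ≤ r1)
    (h3 : ℵ₀ ≤ r3) (h3' : r3 ≤ Order.succ r1) (h4 : 2 ≤ r4) (h43 : r4 ≤ r3)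
    (h : cf r1 < r4 ∨ r3 ≤ cf r1) :
    cov r1 r1 r3 r4 = cf r1 :=
  stmt7_general r1 r3 r4 h1 h3 h4 h
end
end

section
/- Let ρ₁ ≥ ρ₂ ≥ ρ₃ ≥ ω and ρ₃ ≥ ρ₄ ≥ 2 be cardinals. Then cov(ρ₁, ρ₂, ρ₃, ρ₄) = cov(ρ₁, ρ₂, ρ₃, max{ω, ρ₄}). -/
open Cardinal

noncomputable section

lemma finset_biUnion_card_lt {ι α : Type*} {r2 : Cardinal} (h : ℵ₀ ≤ r2)
    (F : Finset ι) (f : ι → Set α) (hF : ∀ i ∈ F, #(f i) < r2) :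
    #(⋃ i ∈ F, f i) < r2 := by
  classical
  induction F using Finset.induction_on with
  | empty => simpa using aleph0_pos.trans_le h
  | @insert a F ha ih =>
    rw [Finset.set_biUnion_insert]
    refine lt_of_le_of_lt (mk_union_le _ _) (Cardinal.add_lt_of_lt h ?_ ?_)
    · exact hF a (Finset.mem_insert_self a F)
    · exact ih fun i hi => hF i (Finset.mem_insert_of_mem hi)

lemma cov_set_nonempty (r1 r2 r3 r4 : Cardinal) (h23 : r3 ≤ r2) (h4 : 2 ≤ r4) :
    Set.Nonempty { c | ∃ X : Set (Set r1.out),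
      (∀ x ∈ X, #x < r2) ∧
      (∀ b : Set r1.out, #b < r3 → ∃ Q : Set (Set r1.out), Q ⊆ X ∧ #Q < r4 ∧ b ⊆ ⋃₀ Q) ∧
      #X = c } := by
  refine ⟨_, {s | #s < r2}, fun x hx => hx, fun b hb => ⟨{b}, ?_, ?_, ?_⟩, rfl⟩
  · intro s hs
    rcases hs with rfl
    exact lt_of_lt_of_le hb h23
  · simpa using Cardinal.one_lt_two.trans_le h4
  · rw [Set.sUnion_singleton]

theorem stmt9 (r1 r2 r3 r4 : Cardinal) (h12 : r2 ≤ r1) (h23 : r3 ≤ r2)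
    (h3 : ℵ₀ ≤ r3) (h34 : r4 ≤ r3) (h4 : 2 ≤ r4) :
    cov r1 r2 r3 r4 = cov r1 r2 r3 (max ℵ₀ r4) := by
  rcases le_or_gt ℵ₀ r4 with h | h
  · rw [max_eq_right h]
  rw [max_eq_left h.le]
  have h2 : ℵ₀ ≤ r2 := h3.trans h23
  have hne4 := cov_set_nonempty r1 r2 r3 r4 h23 h4
  have hneω := cov_set_nonempty r1 r2 r3 ℵ₀ h23 (le_of_lt (by exact_mod_cast Cardinal.nat_lt_aleph0 2))
  apply le_antisymm
  · -- cov r4 ≤ cov ℵ₀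
    obtain ⟨X, hX2, hXcov, hXc⟩ := csInf_mem hneω
    -- X must be infinite
    have hXinf : ℵ₀ ≤ #X := by
      by_contra hfin
      push_neg at hfin
      have hXfin : X.Finite := lt_aleph0_iff_set_finite.mp hfin
      have hcover : (Set.univ : Set r1.out) ⊆ ⋃₀ X := by
        intro a _
        obtain ⟨Q, hQX, hQc, hQb⟩ := hXcov {a} (by
          rw [mk_singleton]; exact lt_of_lt_of_le one_lt_aleph0 h3)
        exact Set.sUnion_subset_sUnion hQX (hQb rfl)
      have h1 : r1 ≤ #(⋃₀ X) := by
        have := mk_le_mk_of_subset hcover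
        rwa [mk_univ, mk_out] at this
      have h2' : #(⋃₀ X) < r2 := by
        have heq : ⋃₀ X = ⋃ x ∈ hXfin.toFinset, x := by
          ext a; simp [Set.mem_sUnion]
        rw [heq]
        exact finset_biUnion_card_lt h2 _ _ fun x hx =>
          hX2 x (hXfin.mem_toFinset.mp hx)
      exact absurd (lt_of_le_of_lt h1 h2') (not_lt.mpr h12)
    haveI : Infinite ↥X := Cardinal.aleph0_le_mk_iff.1 hXinf
    set g : Finset ↥X → Set r1.out := fun F => ⋃ x ∈ F, (x : Set r1.out) with hg
    have hmem : (#(Set.range g)) ∈ { c | ∃ X : Set (Set r1.out),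
        (∀ x ∈ X, #x < r2) ∧
        (∀ b : Set r1.out, #b < r3 → ∃ Q : Set (Set r1.out), Q ⊆ X ∧ #Q < r4 ∧ b ⊆ ⋃₀ Q) ∧
        #X = c } := by
      refine ⟨Set.range g, ?_, ?_, rfl⟩
      · rintro s ⟨F, rfl⟩
        exact finset_biUnion_card_lt h2 F _ fun x _ => hX2 x x.2
      · intro b hb
        obtain ⟨Q, hQX, hQc, hQb⟩ := hXcov b hb
        have hQfin : Q.Finite := lt_aleph0_iff_set_finite.mp hQc
        have hQXfin : {x : ↥X | (x : Set r1.out) ∈ Q}.Finite := by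
          have : {x : ↥X | (x : Set r1.out) ∈ Q} = Subtype.val ⁻¹' Q := rfl
          rw [this]
          exact hQfin.preimage (Subtype.val_injective.injOn)
        refine ⟨{g hQXfin.toFinset}, ?_, ?_, ?_⟩
        · exact Set.singleton_subset_iff.mpr ⟨hQXfin.toFinset, rfl⟩
        · rw [mk_singleton]; exact Cardinal.one_lt_two.trans_le h4
        · rw [Set.sUnion_singleton]
          have heq : g hQXfin.toFinset = ⋃₀ Q := by
            ext a
            simp only [hg, Set.mem_iUnion, Set.Finite.mem_toFinset, Set.mem_setOf_eq,
              Set.mem_sUnion]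
            constructor
            · rintro ⟨x, hx, hax⟩; exact ⟨x, hx, hax⟩
            · rintro ⟨q, hq, haq⟩; exact ⟨⟨q, hQX hq⟩, hq, haq⟩
          rw [heq]; exact hQb
    refine le_trans (csInf_le' hmem) ?_
    calc #(Set.range g) ≤ #(Finset ↥X) := mk_range_le
      _ = #↥X := mk_finset_of_infinite ↥X
      _ = cov r1 r2 r3 ℵ₀ := hXc
  · -- cov ℵ₀ ≤ cov r4
    obtain ⟨X, hX2, hXcov, hXc⟩ := csInf_mem hne4
    refine csInf_le' ⟨X, hX2, fun b hb => ?_, hXc⟩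
    obtain ⟨Q, h1', h2', h3'⟩ := hXcov b hb
    exact ⟨Q, h1', h2'.trans h, h3'⟩
end
end

section
/- Let ρ₁ ≥ ρ₂ ≥ ρ₃ ≥ ω and ρ₃ ≥ ρ₄ ≥ 2 be cardinals. Then cov(ρ₁⁺, ρ₂, ρ₃, ρ₄) = max{ρ₁⁺, cov(ρ₁, ρ₂, ρ₃, ρ₄)}. -/
/-!
`ρ₁⁺` is regular, so every set of size `< ρ₃ ≤ ρ₁⁺` in `ρ₁⁺` lies in a proper initial segment, which
has size at most `ρ₁` and therefore carries a copy of an optimal cover of `ρ₁`; the `ρ₁⁺` copies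
together cover `ρ₁⁺`. Conversely a cover of `ρ₁⁺` restricts to a cover of `ρ₁`, and since its
members have size `< ρ₂ ≤ ρ₁` it needs `ρ₁⁺` of them to cover every point.
-/

open Cardinal

noncomputable section

open Set

universe u

namespace Cardinal

variable {α β : Type u} {r2 r3 r4 : Cardinal.{u}}

def IsCover (α : Type u) (r2 r3 r4 : Cardinal.{u}) (X : Set (Set α)) : Prop :=
  (∀ x ∈ X, #x < r2) ∧ ∀ b : Set α, #b < r3 → ∃ Q ⊆ X, #Q < r4 ∧ b ⊆ ⋃₀ Q

theorem isCover_setOf_mk_lt (h23 : r3 ≤ r2) (h4 : 1 < r4) :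
    IsCover α r2 r3 r4 {x | #x < r2} := by
  refine ⟨fun x hx => hx, fun b hb => ⟨{b}, ?_, ?_, subset_sUnion_of_mem rfl⟩⟩
  · simpa using hb.trans_le h23
  · rwa [mk_singleton]

theorem cov_le_mk {r1 : Cardinal.{u}} {X : Set (Set r1.out)} (hX : IsCover r1.out r2 r3 r4 X) :
    cov r1 r2 r3 r4 ≤ #X :=
  csInf_le' ⟨X, hX.1, hX.2, rfl⟩

theorem exists_isCover_mk_eq_cov (r1 : Cardinal.{u}) (h23 : r3 ≤ r2) (h4 : 1 < r4) :
    ∃ X : Set (Set r1.out), IsCover r1.out r2 r3 r4 X ∧ #X = cov r1 r2 r3 r4 := by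
  obtain ⟨X, hX₁, hX₂, hX⟩ : cov r1 r2 r3 r4 ∈ _ :=
    csInf_mem ⟨_, _, (isCover_setOf_mk_lt h23 h4).1, (isCover_setOf_mk_lt h23 h4).2, rfl⟩
  exact ⟨X, ⟨hX₁, hX₂⟩, hX⟩

theorem IsCover.preimage {f : α → β} (hf : Function.Injective f) {X : Set (Set β)}
    (hX : IsCover β r2 r3 r4 X) : IsCover α r2 r3 r4 ((f ⁻¹' ·) '' X) := by
  refine ⟨?_, fun b hb => ?_⟩
  · rintro _ ⟨x, hx, rfl⟩
    exact (mk_preimage_of_injective f x hf).trans_lt (hX.1 x hx)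
  obtain ⟨Q, hQX, hQ, hbQ⟩ := hX.2 (f '' b) ((mk_image_eq hf).trans_lt hb)
  refine ⟨(f ⁻¹' ·) '' Q, image_mono hQX, mk_image_le.trans_lt hQ, fun t ht => ?_⟩
  obtain ⟨q, hq, hfq⟩ := hbQ (mem_image_of_mem f ht)
  exact ⟨f ⁻¹' q, mem_image_of_mem _ hq, hfq⟩

theorem IsCover.iUnion_image_val {ι : Type*} {A : ι → Set β} {X : ∀ i, Set (Set (A i))}
    (hX : ∀ i, IsCover (A i) r2 r3 r4 (X i)) (hA : ∀ b : Set β, #b < r3 → ∃ i, b ⊆ A i) :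
    IsCover β r2 r3 r4 (⋃ i, (Subtype.val '' ·) '' X i) := by
  refine ⟨?_, fun b hb => ?_⟩
  · rintro _ ⟨_, ⟨i, rfl⟩, x, hx, rfl⟩
    exact mk_image_le.trans_lt ((hX i).1 x hx)
  obtain ⟨i, hbA⟩ := hA b hb
  obtain ⟨Q, hQX, hQ, hbQ⟩ :=
    (hX i).2 (Subtype.val ⁻¹' b) ((mk_preimage_of_injective _ b Subtype.val_injective).trans_lt hb)
  refine ⟨(Subtype.val '' ·) '' Q, (image_mono hQX).trans (subset_iUnion_of_subset i le_rfl),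
    mk_image_le.trans_lt hQ, fun t ht => ?_⟩
  obtain ⟨q, hq, htq⟩ := hbQ (show ⟨t, hbA ht⟩ ∈ Subtype.val ⁻¹' b from ht)
  exact ⟨_, mem_image_of_mem _ hq, ⟨t, hbA ht⟩, htq, rfl⟩

theorem IsCover.mk_le_mul {X : Set (Set α)} (hX : IsCover α r2 r3 r4 X) (h3 : 1 < r3) :
    #α ≤ #X * r2 := by
  have hcover : ⋃₀ X = Set.univ := eq_univ_of_forall fun t => by
    obtain ⟨Q, hQX, -, htQ⟩ := hX.2 {t} (mk_singleton t ▸ h3)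
    exact sUnion_mono hQX (htQ rfl)
  calc #α = #(⋃₀ X) := by rw [hcover, Cardinal.mk_univ]
    _ ≤ #X * ⨆ x : X, #x := mk_sUnion_le X
    _ ≤ #X * r2 := mul_le_mul' le_rfl (ciSup_le' fun x => (hX.1 x.1 x.2).le)

theorem IsRegular.exists_subset_preimage_Iio {c : Cardinal.{u}} (hc : c.IsRegular)
    (e : α ≃ c.ord.ToType) {b : Set α} (hb : #b < c) : ∃ y, b ⊆ e ⁻¹' Iio y := by
  have hcof : #(e '' b) < Order.cof c.ord.ToType := by
    rwa [Ordinal.cof_toType, hc.cof_ord, mk_image_eq e.injective]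
  obtain ⟨y, hy⟩ := not_isCofinal_iff.1 fun hcofinal => (Order.cof_le hcofinal).not_gt hcof
  exact ⟨y, fun t ht => hy _ (mem_image_of_mem e ht)⟩

theorem cov_le_cov_of_le {r1 r1' : Cardinal.{u}} (h : r1 ≤ r1') (h23 : r3 ≤ r2) (h4 : 1 < r4) :
    cov r1 r2 r3 r4 ≤ cov r1' r2 r3 r4 := by
  obtain ⟨X, hX, hXcard⟩ := exists_isCover_mk_eq_cov r1' h23 h4
  obtain ⟨j⟩ : Nonempty (r1.out ↪ r1'.out) := by rwa [← le_def, mk_out, mk_out]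
  calc cov r1 r2 r3 r4 ≤ #((j ⁻¹' ·) '' X) := cov_le_mk (hX.preimage j.injective)
    _ ≤ cov r1' r2 r3 r4 := mk_image_le.trans hXcard.le

theorem succ_le_cov_succ {r1 : Cardinal.{u}} (h1 : ℵ₀ ≤ r1) (h12 : r2 ≤ r1) (h23 : r3 ≤ r2)
    (h3 : 1 < r3) (h4 : 1 < r4) : Order.succ r1 ≤ cov (Order.succ r1) r2 r3 r4 := by
  obtain ⟨X, hX, hXcard⟩ := exists_isCover_mk_eq_cov (Order.succ r1) h23 h4
  by_contra! hlt
  have hXr1 : #X ≤ r1 := Order.lt_succ_iff.mp (hXcard ▸ hlt)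
  have := calc Order.succ r1 = #(Order.succ r1).out := (mk_out _).symm
    _ ≤ #X * r2 := hX.mk_le_mul h3
    _ ≤ r1 * r1 := mul_le_mul' hXr1 h12
    _ = r1 := mul_eq_self h1
  exact (Order.lt_succ r1).not_ge this

theorem cov_succ_le {r1 : Cardinal.{u}} (h1 : ℵ₀ ≤ r1) (h31 : r3 ≤ Order.succ r1)
    (h23 : r3 ≤ r2) (h4 : 1 < r4) :
    cov (Order.succ r1) r2 r3 r4 ≤ max (Order.succ r1) (cov r1 r2 r3 r4) := by
  obtain ⟨X, hX, hXcard⟩ := exists_isCover_mk_eq_cov r1 h23 h4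
  obtain ⟨e⟩ : Nonempty ((Order.succ r1).out ≃ (Order.succ r1).ord.ToType) := by
    rw [← Cardinal.eq, mk_out, mk_toType, card_ord]
  let A : (Order.succ r1).ord.ToType → Set (Order.succ r1).out := fun y => e ⁻¹' Iio y
  have hA : ∀ y, #(A y) ≤ #r1.out := fun y => by
    rw [mk_out, ← Order.lt_succ_iff]
    refine (mk_preimage_of_injective e _ e.injective).trans_lt ?_
    simpa using mk_Iio_lt y (by rw [mk_toType, card_ord, Ordinal.type_toType])
  let j : ∀ y, A y ↪ r1.out := fun y => Classical.choice ((le_def _ _).1 (hA y))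
  have hsmall : ∀ b : Set (Order.succ r1).out, #b < r3 → ∃ y, b ⊆ A y := fun b hb =>
    (isRegular_succ h1).exists_subset_preimage_Iio e (hb.trans_le h31)
  have hcover := IsCover.iUnion_image_val (fun y => hX.preimage (j y).injective) hsmall
  set M := max (Order.succ r1) (cov r1 r2 r3 r4)
  have hM : ℵ₀ ≤ M := (h1.trans (Order.le_succ r1)).trans (le_max_left _ _)
  calc cov (Order.succ r1) r2 r3 r4
      ≤ #(⋃ y, (Subtype.val '' ·) '' ((j y ⁻¹' ·) '' X)) := cov_le_mk hcover
    _ ≤ #(Order.succ r1).ord.ToType * ⨆ y, #((Subtype.val '' ·) '' ((j y ⁻¹' ·) '' X)) :=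
        mk_iUnion_le _
    _ ≤ M * M := by
        refine mul_le_mul' (by rw [mk_toType, card_ord]; exact le_max_left _ _) ?_
        exact ciSup_le' fun y => (mk_image_le.trans mk_image_le).trans
          (hXcard.le.trans (le_max_right _ _))
    _ = M := mul_eq_self hM

end Cardinal

theorem stmt10_general (r1 r2 r3 r4 : Cardinal) (h12 : r2 ≤ r1) (h23 : r3 ≤ r2)
    (h3 : ℵ₀ ≤ r3) (h4 : 2 ≤ r4) :
    cov (Order.succ r1) r2 r3 r4 = max (Order.succ r1) (cov r1 r2 r3 r4) := by
  have h1 : ℵ₀ ≤ r1 := h3.trans (h23.trans h12)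
  have h3' : 1 < r3 := one_lt_aleph0.trans_le h3
  have h4' : 1 < r4 := Cardinal.one_lt_two.trans_le h4
  refine le_antisymm ?_ (max_le ?_ ?_)
  · exact cov_succ_le h1 ((h23.trans h12).trans (Order.le_succ r1)) h23 h4'
  · exact succ_le_cov_succ h1 h12 h23 h3' h4'
  · exact cov_le_cov_of_le (Order.le_succ r1) h23 h4'

theorem stmt10 (r1 r2 r3 r4 : Cardinal) (h12 : r2 ≤ r1) (h23 : r3 ≤ r2)
    (h3 : ℵ₀ ≤ r3) (h34 : r4 ≤ r3) (h4 : 2 ≤ r4) :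
    cov (Order.succ r1) r2 r3 r4 = max (Order.succ r1) (cov r1 r2 r3 r4) :=
  stmt10_general r1 r2 r3 r4 h12 h23 h3 h4
end
end

section
/- Let ρ₁ ≥ ρ₂ ≥ ρ₃ ≥ ω and ρ₃ > ρ₄ ≥ ω be cardinals. Then cov(ρ₁, ρ₂, ρ₃, ρ₄) = sup { cov(ρ₁, ρ₂, ρ⁺, ρ₄) : ρ₄ ≤ ρ < ρ₃ }. -/
open Cardinal

noncomputable section

section Aux

open Set

universe u

private noncomputable instance stmt13_isWellOrder (o : Ordinal.{u}) :
    IsWellOrder o.ToType (· < ·) := isWellOrder_lt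

private def covSet (r1 r2 r3 r4 : Cardinal.{u}) : Set Cardinal.{u} :=
  { c | ∃ X : Set (Set r1.out),
    (∀ x ∈ X, #x < r2) ∧
    (∀ b : Set r1.out, #b < r3 → ∃ Q : Set (Set r1.out), Q ⊆ X ∧ #Q < r4 ∧ b ⊆ ⋃₀ Q) ∧
    #X = c }

private lemma cov_def' (r1 r2 r3 r4 : Cardinal.{u}) :
    cov r1 r2 r3 r4 = sInf (covSet r1 r2 r3 r4) := rfl

private lemma covSet_nonempty {r1 r2 r3 r4 : Cardinal.{u}} (h32 : r3 ≤ r2) (h4 : ℵ₀ ≤ r4) :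
    (covSet r1 r2 r3 r4).Nonempty := by
  refine ⟨_, {A : Set r1.out | #A < r2}, fun x hx => hx, fun b hb => ⟨{b}, ?_, ?_, ?_⟩, rfl⟩
  · simpa using hb.trans_le h32
  · simpa using one_lt_aleph0.trans_le h4
  · simp

private lemma cov_mem {r1 r2 r3 r4 : Cardinal.{u}} (h32 : r3 ≤ r2) (h4 : ℵ₀ ≤ r4) :
    ∃ X : Set (Set r1.out),
      (∀ x ∈ X, #x < r2) ∧
      (∀ b : Set r1.out, #b < r3 → ∃ Q : Set (Set r1.out), Q ⊆ X ∧ #Q < r4 ∧ b ⊆ ⋃₀ Q) ∧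
      #X = cov r1 r2 r3 r4 :=
  csInf_mem (covSet_nonempty h32 h4)

private lemma cov_mono3 {r1 r2 r4 t u : Cardinal.{u}} (h : t ≤ u) (h32 : u ≤ r2)
    (h4 : ℵ₀ ≤ r4) : cov r1 r2 t r4 ≤ cov r1 r2 u r4 := by
  rw [cov_def', cov_def']
  apply csInf_le_csInf (OrderBot.bddBelow _) (covSet_nonempty h32 h4)
  rintro c ⟨X, h1, h2, h3⟩
  exact ⟨X, h1, fun b hb => h2 b (hb.trans_le h), h3⟩

private lemma cf_le_witness {r1 r2 r4 t3 : Cardinal.{u}} (h21 : r2 ≤ r1) (h1 : ℵ₀ ≤ r1)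
    (h3 : (1 : Cardinal) < t3) {X : Set (Set r1.out)}
    (hX : ∀ x ∈ X, #x < r2)
    (hcov : ∀ b : Set r1.out, #b < t3 → ∃ Q : Set (Set r1.out), Q ⊆ X ∧ #Q < r4 ∧ b ⊆ ⋃₀ Q) :
    cf r1 ≤ #X := by
  by_contra hc
  push_neg at hc
  have hU : ⋃₀ X = Set.univ := by
    rw [eq_univ_iff_forall]
    intro z
    obtain ⟨Q, hQX, -, hzQ⟩ := hcov {z} (by simpa using h3)
    exact sUnion_subset_sUnion hQX (hzQ (mem_singleton z))
  have hkey : r1 ≤ #X * ⨆ q : X, #(q : Set r1.out) := by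
    have h := Cardinal.mk_sUnion_le X
    rwa [hU, mk_univ, mk_out] at h
  have hsup : (⨆ q : X, #(q : Set r1.out)) < r1 :=
    Ordinal.iSup_lt hc fun q => (hX q q.2).trans_le h21
  exact absurd hkey (not_le.mpr
    (Cardinal.mul_lt_of_lt h1 (hc.trans_le (Ordinal.cof_ord_le r1)) hsup))

private lemma r1_le_witness {r1 r2 r4 t3 : Cardinal.{u}} (h21 : r2 < r1) (h1 : ℵ₀ ≤ r1)
    (h3 : (1 : Cardinal) < t3) {X : Set (Set r1.out)}
    (hX : ∀ x ∈ X, #x < r2)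
    (hcov : ∀ b : Set r1.out, #b < t3 → ∃ Q : Set (Set r1.out), Q ⊆ X ∧ #Q < r4 ∧ b ⊆ ⋃₀ Q) :
    r1 ≤ #X := by
  by_contra hc
  push_neg at hc
  have hU : ⋃₀ X = Set.univ := by
    rw [eq_univ_iff_forall]
    intro z
    obtain ⟨Q, hQX, -, hzQ⟩ := hcov {z} (by simpa using h3)
    exact sUnion_subset_sUnion hQX (hzQ (mem_singleton z))
  have hkey : r1 ≤ #X * ⨆ q : X, #(q : Set r1.out) := by
    have h := Cardinal.mk_sUnion_le X
    rwa [hU, mk_univ, mk_out] at h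
  have hsup : (⨆ q : X, #(q : Set r1.out)) ≤ r2 := ciSup_le' fun q => (hX q q.2).le
  have : #X * (⨆ q : X, #(q : Set r1.out)) < r1 :=
    (mul_le_mul' le_rfl hsup).trans_lt (Cardinal.mul_lt_of_lt h1 hc h21)
  exact absurd hkey (not_le.mpr this)

private lemma r1_le_cov {r1 r4 μ : Cardinal.{u}} (h4 : ℵ₀ ≤ r4) (h4cf : r4 ≤ cf r1)
    (hμ1 : cf r1 ≤ μ) (hμ2 : μ < r1) :
    r1 ≤ cov r1 r1 (Order.succ μ) r4 := by
  have h1 : ℵ₀ ≤ r1 := h4.trans (h4cf.trans (hμ1.trans hμ2.le))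
  have h0lt : ℵ₀ < r1 := lt_of_le_of_lt (h4.trans (h4cf.trans hμ1)) hμ2
  obtain ⟨X, hX1, hX2, hX3⟩ := cov_mem (r1 := r1) (Order.succ_le_of_lt hμ2) h4
  rw [← hX3]
  by_contra hcon
  push_neg at hcon
  obtain ⟨ι, f, hf1, hf2⟩ := Ordinal.exists_lsub_cof r1.ord
  have hficard : ∀ i, (f i).card < r1 := fun i =>
    Cardinal.lt_ord.mp (hf1 ▸ Ordinal.lt_lsub f i)
  have hWlt : ∀ i, ⋃₀ {q ∈ X | #q < (f i).card} ≠ Set.univ := by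
    intro i h
    have h1' := Cardinal.mk_sUnion_le {q ∈ X | #q < (f i).card}
    have h2' : (⨆ s : {q ∈ X | #q < (f i).card}, #(s : Set r1.out)) ≤ (f i).card :=
      ciSup_le' fun s => s.2.2.le
    have h3' : #(⋃₀ {q ∈ X | #q < (f i).card}) < r1 :=
      (h1'.trans (mul_le_mul' (mk_le_mk_of_subset (sep_subset _ _)) h2')).trans_lt
        (Cardinal.mul_lt_of_lt h1 hcon (hficard i))
    rw [h, mk_univ, mk_out] at h3'
    exact lt_irrefl _ h3'
  choose x hx using fun i => (Set.ne_univ_iff_exists_notMem _).mp (hWlt i)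
  have hb : #(Set.range x) < Order.succ μ := by
    rw [Order.lt_succ_iff]
    exact Cardinal.mk_range_le.trans (hf2.trans_le hμ1)
  obtain ⟨Q, hQX, hQc, hQb⟩ := hX2 _ hb
  have hTlt : (⨆ q : Q, #(q : Set r1.out)) < r1 :=
    Ordinal.iSup_lt (hQc.trans_le h4cf) fun q => hX1 q (hQX q.2)
  have hTle : ∀ c, c < r1 → c ≤ ⨆ q : Q, #(q : Set r1.out) := by
    intro c hcr
    have hlt : c.ord < Ordinal.lsub f := by rw [hf1]; exact Cardinal.ord_lt_ord.mpr hcr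
    obtain ⟨i, hi⟩ := Ordinal.lt_lsub_iff.mp hlt
    obtain ⟨q, hqQ, hxq⟩ := hQb ⟨i, rfl⟩
    have hqX : q ∈ X := hQX hqQ
    have hnlt : ¬ #q < (f i).card := fun hlt' => (hx i) ⟨q, ⟨hqX, hlt'⟩, hxq⟩
    calc c = c.ord.card := (Cardinal.card_ord c).symm
    _ ≤ (f i).card := Ordinal.card_le_card hi
    _ ≤ #q := not_lt.mp hnlt
    _ ≤ ⨆ q : Q, #(q : Set r1.out) :=
        le_ciSup (Cardinal.bddAbove_range _) (⟨q, hqQ⟩ : Q)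
  rcases lt_or_ge (Order.succ (⨆ q : Q, #(q : Set r1.out))) r1 with h | h
  · exact absurd (hTle _ h) (not_le.mpr (Order.lt_succ _))
  · have heq : r1 = Order.succ (⨆ q : Q, #(q : Set r1.out)) :=
      le_antisymm h (Order.succ_le_of_lt hTlt)
    have hreg : Cardinal.IsRegular r1 := by
      rw [heq]; exact Cardinal.isRegular_succ (hTle ℵ₀ h0lt)
    have hcfeq : cf r1 = r1 := hreg.cof_eq
    have : r1 < r1 := by
      have := hμ1.trans_lt hμ2
      rwa [hcfeq] at this
    exact lt_irrefl _ this

private lemma cov_le_cf {r1 t3 r4 : Cardinal.{u}} (h1 : ℵ₀ ≤ r1) (hcf : cf r1 < r4) :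
    cov r1 r1 t3 r4 ≤ cf r1 := by
  obtain ⟨ι, f, hf1, hf2⟩ := Ordinal.exists_lsub_cof r1.ord
  obtain ⟨e⟩ : Nonempty (r1.out ≃ r1.ord.ToType) :=
    Cardinal.eq.mp (by simp)
  have hyex : ∀ i, ∃ y : r1.ord.ToType, Ordinal.typein (α := r1.ord.ToType) (· < ·) y = f i := by
    intro i
    have hlt : f i < Ordinal.type (α := r1.ord.ToType) (· < ·) := by
      rw [Ordinal.type_toType]; exact hf1 ▸ Ordinal.lt_lsub f i
    exact Ordinal.typein_surj _ hlt
  choose y hy using hyex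
  have hcover : ∀ z : r1.out, ∃ i, e z ≤ y i := by
    intro z
    have hlt : Ordinal.typein (α := r1.ord.ToType) (· < ·) (e z) < Ordinal.lsub f := by
      rw [hf1]
      exact Ordinal.typein_lt_self (e z)
    obtain ⟨i, hi⟩ := Ordinal.lt_lsub_iff.mp hlt
    rw [← hy i] at hi
    exact ⟨i, (Ordinal.typein_le_typein' r1.ord).mp hi⟩
  set P : ι → Set r1.out := fun i => {z | e z ≤ y i} with hP
  have hmemcard : ∀ i, #(P i) < r1 := by
    intro i
    have h2' : #(P i) ≤ #(Iic (y i)) :=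
      Cardinal.mk_preimage_of_injective e _ e.injective
    have h3' : #(Iic (y i)) ≤ #(Iio (y i)) + 1 := by
      rw [← Set.Iio_union_right]
      exact (Cardinal.mk_union_le _ _).trans (by simp)
    have h4' : #(Iio (y i)) = (f i).card := by
      rw [← hy i]
      exact Ordinal.card_typein (r := ((· < ·) : r1.ord.ToType → r1.ord.ToType → Prop)) (y i)
    have h5' : (f i).card < r1 := Cardinal.lt_ord.mp (hf1 ▸ Ordinal.lt_lsub f i)
    calc #(P i) ≤ #(Iio (y i)) + 1 := h2'.trans h3'
    _ < r1 := Cardinal.add_lt_of_lt h1 (h4' ▸ h5') (one_lt_aleph0.trans_le h1)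
  have hXmem : #(Set.range P) ∈ covSet r1 r1 t3 r4 := by
    refine ⟨Set.range P, ?_, ?_, rfl⟩
    · rintro A ⟨i, rfl⟩; exact hmemcard i
    · intro b _
      refine ⟨Set.range P, Subset.rfl, ?_, ?_⟩
      · exact Cardinal.mk_range_le.trans_lt (hf2.trans_lt hcf)
      · intro z _
        obtain ⟨i, hi⟩ := hcover z
        exact ⟨P i, ⟨i, rfl⟩, hi⟩
  calc cov r1 r1 t3 r4 ≤ #(Set.range P) := by
        rw [cov_def']; exact csInf_le (OrderBot.bddBelow _) hXmem
  _ ≤ #ι := Cardinal.mk_range_le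
  _ = cf r1 := hf2

end Aux

theorem stmt13 (r1 r2 r3 r4 : Cardinal) (h12 : r2 ≤ r1) (h23 : r3 ≤ r2)
    (h34 : r4 < r3) (h4 : ℵ₀ ≤ r4) :
    cov r1 r2 r3 r4 = sSup { c | ∃ ρ, r4 ≤ ρ ∧ ρ < r3 ∧ c = cov r1 r2 (Order.succ ρ) r4 } := by
  have h13 : r3 ≤ r1 := h23.trans h12
  have h03 : ℵ₀ < r3 := h4.trans_lt h34
  have h1inf : ℵ₀ ≤ r1 := (h03.trans_le h13).le
  set S := {c | ∃ ρ, r4 ≤ ρ ∧ ρ < r3 ∧ c = cov r1 r2 (Order.succ ρ) r4} with hSdef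
  have hmem_le : ∀ c ∈ S, c ≤ cov r1 r2 r3 r4 := by
    rintro c ⟨ρ, hρ1, hρ2, rfl⟩
    exact cov_mono3 (Order.succ_le_of_lt hρ2) h23 h4
  have hne : S.Nonempty := ⟨_, r4, le_rfl, h34, rfl⟩
  have hbdd : BddAbove S := ⟨_, hmem_le⟩
  refine le_antisymm ?_ (csSup_le hne hmem_le)
  set s := sSup S with hs
  have hsS : ∀ c ∈ S, c ≤ s := fun c hc => le_csSup hbdd hc
  have hc0S : cov r1 r2 (Order.succ r4) r4 ∈ S := ⟨r4, le_rfl, h34, rfl⟩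
  have hsucc4le : Order.succ r4 ≤ r2 := (Order.succ_le_of_lt h34).trans h23
  have h1succ4 : (1 : Cardinal) < Order.succ r4 :=
    (one_lt_aleph0.trans_le h4).trans_le (Order.le_succ r4)
  have hcf1 : cf r1 ≤ cov r1 r2 (Order.succ r4) r4 := by
    obtain ⟨X, hX1, hX2, hX3⟩ := cov_mem (r1 := r1) hsucc4le h4
    rw [← hX3]
    exact cf_le_witness h12 h1inf h1succ4 hX1 hX2
  have hcfs : cf r1 ≤ s := hcf1.trans (hsS _ hc0S)
  have hcfinf : ℵ₀ ≤ cf r1 := Ordinal.aleph0_le_cof.mpr (Cardinal.isSuccLimit_ord h1inf)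
  have hs_inf : ℵ₀ ≤ s := hcfinf.trans hcfs
  by_cases hcf3 : cf r3 ≤ s
  · -- construction: union of witnesses along a cofinal family
    obtain ⟨ι, f, hf1, hf2⟩ := Ordinal.exists_lsub_cof r3.ord
    haveI hne_ι : Nonempty ι := by
      apply Cardinal.mk_ne_zero_iff.mp
      rw [hf2]
      exact (aleph0_pos.trans_le
        (Ordinal.aleph0_le_cof.mpr (Cardinal.isSuccLimit_ord h03.le))).ne'
    have hcard : ∀ i, (f i).card ⊔ r4 < r3 := fun i =>
      max_lt (Cardinal.lt_ord.mp (hf1 ▸ Ordinal.lt_lsub f i)) h34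
    have hsle : ∀ i, Order.succ ((f i).card ⊔ r4) ≤ r2 := fun i =>
      (Order.succ_le_of_lt (hcard i)).trans h23
    choose Xf hXf1 hXf2 hXf3 using fun i => cov_mem (r1 := r1) (r4 := r4) (hsle i) h4
    have hXfS : ∀ i, #(Xf i) ≤ s := fun i => by
      rw [hXf3 i]; exact hsS _ ⟨_, le_max_right _ _, hcard i, rfl⟩
    have hXmem : #(⋃ i, Xf i) ∈ covSet r1 r2 r3 r4 := by
      refine ⟨_, ?_, ?_, rfl⟩
      · intro A hA
        obtain ⟨i, hi⟩ := Set.mem_iUnion.mp hA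
        exact hXf1 i A hi
      · intro b hb
        have hblt : (#b).ord < Ordinal.lsub f := by
          rw [hf1]; exact Cardinal.ord_lt_ord.mpr hb
        obtain ⟨i, hi⟩ := Ordinal.lt_lsub_iff.mp hblt
        have hble : #b < Order.succ ((f i).card ⊔ r4) := by
          rw [Order.lt_succ_iff]
          refine le_sup_of_le_left ?_
          calc #b = (#b).ord.card := (Cardinal.card_ord _).symm
          _ ≤ (f i).card := Ordinal.card_le_card hi
        obtain ⟨Q, hQ1, hQ2, hQ3⟩ := hXf2 i b hble
        exact ⟨Q, hQ1.trans (Set.subset_iUnion Xf i), hQ2, hQ3⟩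
    have hcovle : cov r1 r2 r3 r4 ≤ #(⋃ i, Xf i) := by
      rw [cov_def']; exact csInf_le (OrderBot.bddBelow _) hXmem
    refine hcovle.trans ?_
    calc #(⋃ i, Xf i) ≤ #ι * ⨆ i, #(Xf i) := Cardinal.mk_iUnion_le Xf
    _ ≤ s * s := mul_le_mul' (by rw [hf2]; exact hcf3) (ciSup_le' hXfS)
    _ = s := Cardinal.mul_eq_self hs_inf
  · push_neg at hcf3
    rcases lt_or_eq_of_le h12 with h21 | h21
    · exfalso
      have hr1le : r1 ≤ cov r1 r2 (Order.succ r4) r4 := by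
        obtain ⟨X, hX1, hX2, hX3⟩ := cov_mem (r1 := r1) hsucc4le h4
        rw [← hX3]
        exact r1_le_witness h21 h1inf h1succ4 hX1 hX2
      exact absurd ((Ordinal.cof_ord_le r3).trans
        (h13.trans (hr1le.trans (hsS _ hc0S)))) (not_le.mpr hcf3)
    · subst h21
      by_cases h4cf : cf r2 < r4
      · exact (cov_le_cf h1inf h4cf).trans hcfs
      · push_neg at h4cf
        exfalso
        have hcflt : cf r2 < r3 := lt_of_le_of_lt hcfs (hcf3.trans_le (Ordinal.cof_ord_le r3))
        have hc1S : cov r2 r2 (Order.succ (cf r2)) r4 ∈ S := ⟨cf r2, h4cf, hcflt, rfl⟩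
        have hr1le : r2 ≤ cov r2 r2 (Order.succ (cf r2)) r4 :=
          r1_le_cov h4 h4cf le_rfl (hcflt.trans_le h23)
        exact absurd ((Ordinal.cof_ord_le r3).trans
          (h23.trans (hr1le.trans (hsS _ hc1S)))) (not_le.mpr hcf3)
end
end

section
/- Let χ be an uncountable limit cardinal such that there is an infinite cardinal η < χ with cov(τ, κ, κ, 2) < χ for every regular cardinal κ with η < κ < χ and every cardinal τ with κ ≤ τ < χ. Then for every (possibly singular) cardinal ν with η < ν < χ and every cardinal τ with ν ≤ τ < χ, cov(τ, ν, ν, 2) ≤ χ. -/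
open Cardinal

noncomputable section

universe u

/-! A set `b` with `#b < ν` has size `< κ` for the regular cardinal `κ = (max η #b)⁺`, and
`η < κ ≤ ν`; these `κ` can be indexed by the ordinals below `ν.ord`. Taking one optimal covering
family of `P_κ(τ)` for each index, their union covers `P_ν(τ)` and has size at most `ν · χ = χ`. -/

section CoveringFamilies

variable {τ r₂ r₃ r₄ : Cardinal.{u}}

theorem exists_cov_family (h₃₂ : r₃ ≤ r₂) (h₄ : 1 < r₄) :
    ∃ X : Set (Set τ.out), (∀ x ∈ X, #x < r₂) ∧
      (∀ b : Set τ.out, #b < r₃ → ∃ Q ⊆ X, #Q < r₄ ∧ b ⊆ ⋃₀ Q) ∧ #X = cov τ r₂ r₃ r₄ :=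
  csInf_mem (s := { c | ∃ X : Set (Set τ.out), (∀ x ∈ X, #x < r₂) ∧
      (∀ b : Set τ.out, #b < r₃ → ∃ Q ⊆ X, #Q < r₄ ∧ b ⊆ ⋃₀ Q) ∧ #X = c })
    ⟨_, {x | #x < r₂}, fun _ hx => hx,
      fun b hb => ⟨{b}, by simpa using hb.trans_le h₃₂, by simpa using h₄, by simp⟩, rfl⟩

theorem cov_le_mk (X : Set (Set τ.out)) (hX : ∀ x ∈ X, #x < r₂)
    (hcover : ∀ b : Set τ.out, #b < r₃ → ∃ Q ⊆ X, #Q < r₄ ∧ b ⊆ ⋃₀ Q) :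
    cov τ r₂ r₃ r₄ ≤ #X :=
  csInf_le' ⟨X, hX, hcover, rfl⟩

theorem cov_le_mk_mul_iSup {ι : Type u} {ν : Cardinal.{u}} (κ : ι → Cardinal.{u})
    (hκν : ∀ i, κ i ≤ ν) (hcofinal : ∀ c < ν, ∃ i, c < κ i) (h₄ : 1 < r₄) :
    cov τ ν ν r₄ ≤ #ι * ⨆ i, cov τ (κ i) (κ i) r₄ := by
  choose X hX hcover hcard using fun i => exists_cov_family (τ := τ) (le_refl (κ i)) h₄
  calc cov τ ν ν r₄ ≤ #(⋃ i, X i) := by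
        refine cov_le_mk _ ?_ fun b hb => ?_
        · simp only [Set.mem_iUnion]
          rintro x ⟨i, hx⟩
          exact (hX i x hx).trans_le (hκν i)
        · obtain ⟨i, hbi⟩ := hcofinal _ hb
          obtain ⟨Q, hQX, hQ, hbQ⟩ := hcover i b hbi
          exact ⟨Q, hQX.trans (Set.subset_iUnion X i), hQ, hbQ⟩
    _ ≤ #ι * ⨆ i, #(X i) := mk_iUnion_le X
    _ = #ι * ⨆ i, cov τ (κ i) (κ i) r₄ := by simp only [hcard]

end CoveringFamilies

theorem exists_isRegular_cofinal {η ν : Cardinal.{u}} (hη : ℵ₀ ≤ η) (hην : η < ν) :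
    ∃ κ : ν.ord.ToType → Cardinal.{u}, (∀ i, (κ i).IsRegular ∧ η < κ i ∧ κ i ≤ ν) ∧
      ∀ c < ν, ∃ i, c < κ i := by
  refine ⟨fun i => Order.succ (max η (i.toOrd : Ordinal).card), fun i => ⟨?_, ?_, ?_⟩, ?_⟩
  · exact isRegular_succ (hη.trans (le_max_left _ _))
  · exact (le_max_left _ _).trans_lt (Order.lt_succ _)
  · exact Order.succ_le_of_lt (max_lt hην (lt_ord.1 (i.toOrd).2))
  · intro c hc
    refine ⟨Ordinal.ToType.mk ⟨c.ord, ord_lt_ord.2 hc⟩, ?_⟩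
    simp only [Ordinal.ToType.toOrd, OrderIso.symm_apply_apply, card_ord]
    exact (le_max_right _ _).trans_lt (Order.lt_succ _)

theorem stmt17_general (χ : Cardinal)
    (η : Cardinal) (hη : ℵ₀ ≤ η)
    (h : ∀ κ τ : Cardinal, cf κ = κ → η < κ → κ < χ → κ ≤ τ → τ < χ → cov τ κ κ 2 < χ) :
    ∀ ν τ : Cardinal, η < ν → ν < χ → ν ≤ τ → τ < χ → cov τ ν ν 2 ≤ χ := by
  intro ν τ hην hνχ hντ hτχ
  obtain ⟨κ, hκ, hcofinal⟩ := exists_isRegular_cofinal hη hην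
  have hκcov : ∀ i, cov τ (κ i) (κ i) 2 < χ := fun i =>
    have ⟨hreg, hηκ, hκν⟩ := hκ i
    h _ τ hreg.cof_ord hηκ (hκν.trans_lt hνχ) (hκν.trans hντ) hτχ
  calc cov τ ν ν 2 ≤ #ν.ord.ToType * ⨆ i, cov τ (κ i) (κ i) 2 :=
        cov_le_mk_mul_iSup κ (fun i => (hκ i).2.2) hcofinal one_lt_two
    _ ≤ χ * χ := mul_le_mul' ((mk_ord_toType ν).trans_le hνχ.le) (ciSup_le' fun i => (hκcov i).le)
    _ = χ := mul_eq_self (hη.trans (hην.trans hνχ).le)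

theorem stmt17 (χ : Cardinal) (hχ : ℵ₁ ≤ χ)
    (hlim : ∀ c : Cardinal, c < χ → Order.succ c < χ)
    (η : Cardinal) (hη : ℵ₀ ≤ η) (hηχ : η < χ)
    (h : ∀ κ τ : Cardinal, cf κ = κ → η < κ → κ < χ → κ ≤ τ → τ < χ → cov τ κ κ 2 < χ) :
    ∀ ν τ : Cardinal, η < ν → ν < χ → ν ≤ τ → τ < χ → cov τ ν ν 2 ≤ χ :=
  stmt17_general χ η hη h
end
end

section
/- Let σ < χ < λ be infinite cardinals with cov(λ, χ⁺, χ⁺, σ) ≤ λ. Then u(σ, λ) ≤ max{u(σ, χ), u(χ⁺, λ)}, where u(κ, μ) = cov(μ, κ, κ, ω). -/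
open Cardinal

noncomputable section

set_option maxHeartbeats 1000000 in
lemma cov_spec (r1 r2 : Cardinal) :
    ∃ X : Set (Set r1.out),
      (∀ x ∈ X, #x < r2) ∧
      (∀ b : Set r1.out, #b < r2 → ∃ Q : Set (Set r1.out), Q ⊆ X ∧ #Q < ℵ₀ ∧ b ⊆ ⋃₀ Q) ∧
      #X = cov r1 r2 r2 ℵ₀ := by
  have hne : ({ c | ∃ X : Set (Set r1.out),
      (∀ x ∈ X, #x < r2) ∧
      (∀ b : Set r1.out, #b < r2 → ∃ Q : Set (Set r1.out), Q ⊆ X ∧ #Q < ℵ₀ ∧ b ⊆ ⋃₀ Q) ∧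
      #X = c }).Nonempty := by
    refine ⟨#{x : Set r1.out | #x < r2}, {x | #x < r2}, fun x hx => hx, ?_, rfl⟩
    intro b hb
    refine ⟨{b}, by simpa using hb, ?_, by simp⟩
    rw [Cardinal.mk_singleton]
    exact Cardinal.one_lt_aleph0
  unfold cov
  exact csInf_mem hne

set_option maxHeartbeats 1000000 in
theorem stmt18 (σ χ lam : Cardinal) (hσ : ℵ₀ ≤ σ) (hσχ : σ < χ) (hcl : χ < lam)
    (hcov : cov lam (Order.succ χ) (Order.succ χ) σ ≤ lam) :
    u σ lam ≤ max (u σ χ) (u (Order.succ χ) lam) :=  by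
  obtain ⟨X, hX1, hX2, hX3⟩ := cov_spec χ σ
  obtain ⟨Y, hY1, hY2, hY3⟩ := cov_spec lam (Order.succ χ)
  have hχ0 : Nonempty χ.out := by
    rw [← Cardinal.mk_ne_zero_iff, Cardinal.mk_out]
    exact (lt_of_lt_of_le (lt_of_lt_of_le aleph0_pos hσ) hσχ.le).ne'
  have he0 : ∀ y : Set lam.out, ∃ e : ↥y → χ.out, #y ≤ χ → Function.Injective e := by
    intro y
    by_cases h : #y ≤ χ
    · rw [← Cardinal.mk_out χ] at h
      obtain ⟨f⟩ := (Cardinal.le_def _ _).mp h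
      exact ⟨f, fun _ => f.injective⟩
    · exact ⟨fun _ => Classical.arbitrary _, fun hc => absurd hc h⟩
  choose e he using he0
  set F : Set lam.out → Set (Set lam.out) :=
    fun y => (fun x => Subtype.val '' (e y ⁻¹' x)) '' X with hF
  set Z : Set (Set lam.out) := ⋃ y ∈ Y, F y with hZ
  have hZmem : u σ lam ≤ #Z := by
    apply csInf_le'
    refine ⟨Z, ?_, ?_, rfl⟩
    · rintro z hz
      simp only [hZ, Set.mem_iUnion] at hz
      obtain ⟨y, hy, hzF⟩ := hz
      obtain ⟨x, hx, rfl⟩ := hzF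
      have hinj : Function.Injective (e y) := he y (Order.lt_succ_iff.mp (hY1 y hy))
      calc #(Subtype.val '' (e y ⁻¹' x)) ≤ #(e y ⁻¹' x) := Cardinal.mk_image_le
        _ ≤ #x := Cardinal.mk_preimage_of_injective _ _ hinj
        _ < σ := hX1 x hx
    · intro b hb
      have hb' : #b < Order.succ χ := hb.trans (hσχ.trans (Order.lt_succ χ))
      obtain ⟨QY, hQY1, hQY2, hQY3⟩ := hY2 b hb'
      have hc : ∀ y : Set lam.out, ∃ Qy : Set (Set χ.out),
          Qy ⊆ X ∧ #Qy < ℵ₀ ∧ (e y '' (Subtype.val ⁻¹' b)) ⊆ ⋃₀ Qy := by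
        intro y
        apply hX2
        calc #(e y '' (Subtype.val ⁻¹' b)) ≤ #(Subtype.val ⁻¹' b : Set ↥y) :=
              Cardinal.mk_image_le
          _ ≤ #b := Cardinal.mk_preimage_of_injective _ _ Subtype.coe_injective
          _ < σ := hb
      choose Qf hQf1 hQf2 hQf3 using hc
      refine ⟨⋃ y ∈ QY, (fun x => Subtype.val '' (e y ⁻¹' x)) '' (Qf y), ?_, ?_, ?_⟩
      · intro z hz
        simp only [Set.mem_iUnion] at hz
        obtain ⟨y, hy, x, hx, rfl⟩ := hz
        simp only [hZ, Set.mem_iUnion]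
        exact ⟨y, hQY1 hy, Set.mem_image_of_mem _ (hQf1 y hx)⟩
      · rw [Cardinal.lt_aleph0_iff_set_finite]
        apply Set.Finite.biUnion (Cardinal.lt_aleph0_iff_set_finite.mp hQY2)
        intro y _
        exact Set.Finite.image _ (Cardinal.lt_aleph0_iff_set_finite.mp (hQf2 y))
      · intro a ha
        obtain ⟨y, hy, hay⟩ := hQY3 ha
        have hmem : e y ⟨a, hay⟩ ∈ ⋃₀ Qf y := hQf3 y ⟨⟨a, hay⟩, ha, rfl⟩
        obtain ⟨x, hx, hex⟩ := hmem
        refine ⟨Subtype.val '' (e y ⁻¹' x), ?_, ⟨⟨a, hay⟩, hex, rfl⟩⟩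
        simp only [Set.mem_iUnion]
        exact ⟨y, hy, Set.mem_image_of_mem _ hx⟩
  have haleph : ℵ₀ ≤ u σ χ := by
    by_contra h
    push_neg at h
    have hXfin : #X < ℵ₀ := by rw [hX3]; exact h
    have hcover : (Set.univ : Set χ.out) ⊆ ⋃₀ X := by
      intro α _
      obtain ⟨Q, hQX, _, hQc⟩ := hX2 {α} (by
        rw [Cardinal.mk_singleton]; exact lt_of_lt_of_le Cardinal.one_lt_aleph0 hσ)
      exact Set.sUnion_mono hQX (hQc rfl)
    have h1 : χ ≤ #X * σ := by
      calc χ = #χ.out := (Cardinal.mk_out χ).symm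
        _ = #(Set.univ : Set χ.out) := Cardinal.mk_univ.symm
        _ ≤ #(⋃₀ X) := Cardinal.mk_le_mk_of_subset hcover
        _ ≤ #X * ⨆ s : ↥X, #↥(s.1) := Cardinal.mk_sUnion_le X
        _ ≤ #X * σ := mul_le_mul_right (ciSup_le' fun s : ↥X => (hX1 s.1 s.2).le) _
    have h2 : χ ≤ σ := le_trans h1 (by
      calc #X * σ ≤ σ * σ := mul_le_mul_left (le_trans hXfin.le hσ) σ
        _ = σ := Cardinal.mul_eq_self hσ)
    exact absurd h2 (not_le.mpr hσχ)
  refine hZmem.trans ?_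
  calc #Z ≤ #Y * ⨆ y : Y, #(F y.1) := Cardinal.mk_biUnion_le F Y
    _ ≤ #Y * #X := mul_le_mul_right (ciSup_le' fun y : ↥Y => Cardinal.mk_image_le) _
    _ ≤ max (max (#Y) (#X)) ℵ₀ := Cardinal.mul_le_max _ _
    _ ≤ max (u σ χ) (u (Order.succ χ) lam) := by
        rw [hX3, hY3]
        exact max_le (max_le (le_max_right _ _) (le_max_left _ _))
          (le_trans haleph (le_max_left _ _))
end
end

section
/- Let κ ≤ χ < λ be infinite cardinals with κ regular and uncountable. Then u(κ, λ) ≤ max{u(κ, χ), u(χ⁺, λ)}, where u(ρ, μ) = cov(μ, ρ, ρ, ω). -/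
open Cardinal

noncomputable section

open Set Cardinal in

variable {κ χ lam : Cardinal}

/-- The defining set of `u σ μ` is nonempty. -/
lemma u_set_nonempty (σ μ : Cardinal) (hσ : 0 < σ) :
    { c | ∃ X : Set (Set μ.out),
      (∀ x ∈ X, #x < σ) ∧
      (∀ b : Set μ.out, #b < σ → ∃ Q : Set (Set μ.out), Q ⊆ X ∧ #Q < ℵ₀ ∧ b ⊆ ⋃₀ Q) ∧
      #X = c }.Nonempty := by
  refine ⟨_, {x : Set μ.out | #x < σ}, fun x hx => hx, ?_, rfl⟩
  intro b hb
  refine ⟨{b}, by simpa using hb, ?_, by simp⟩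
  simpa using one_lt_aleph0

open Set Cardinal

theorem stmt19 (κ χ lam : Cardinal) (hκ : ℵ₁ ≤ κ) (hreg : cf κ = κ)
    (hκχ : κ ≤ χ) (hcl : χ < lam) :
    u κ lam ≤ max (u κ χ) (u (Order.succ χ) lam) := by
  classical
  have hω : ℵ₀ ≤ κ := (aleph0_le_aleph 1).trans hκ
  have hωχ : ℵ₀ ≤ χ := hω.trans hκχ
  have hκreg : Cardinal.IsRegular κ := ⟨hω, hreg.ge⟩
  have hχne : Nonempty χ.out := by
    rw [← Cardinal.mk_ne_zero_iff, Cardinal.mk_out]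
    exact (lt_of_lt_of_le aleph0_pos hωχ).ne'
  -- witnesses
  have h1 := csInf_mem (u_set_nonempty κ χ (aleph0_pos.trans_le hω))
  have h2 := csInf_mem (u_set_nonempty (Order.succ χ) lam
    (aleph0_pos.trans_le (hωχ.trans (Order.le_succ χ))))
  obtain ⟨X₁, hX₁s, hX₁c, hX₁m⟩ := h1
  obtain ⟨X₂, hX₂s, hX₂c, hX₂m⟩ := h2
  -- injections
  have key : ∀ x : Set lam.out, ∃ g : lam.out → χ.out, #x ≤ χ → Set.InjOn g x := by
    intro x
    by_cases hx : #x ≤ χ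
    · have hle : #x ≤ #χ.out := by rwa [Cardinal.mk_out]
      obtain ⟨e⟩ := (Cardinal.le_def _ _).mp hle
      refine ⟨fun a => if h : a ∈ x then e ⟨a, h⟩ else Classical.arbitrary _, fun _ => ?_⟩
      intro a ha b hb hab
      simp only [dif_pos ha, dif_pos hb] at hab
      exact Subtype.mk.injEq .. ▸ (e.injective hab)
    · exact ⟨fun _ => Classical.arbitrary _, fun h => absurd h hx⟩
  choose G hG using key
  have hX₂χ : ∀ x ∈ X₂, #x ≤ χ := by
    intro x hx
    have := hX₂s x hx
    rwa [Order.lt_succ_iff] at this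
  set P : Set lam.out → Set χ.out → Set lam.out := fun x y => x ∩ G x ⁻¹' y with hP
  set X : Set (Set lam.out) := Set.image2 P X₂ X₁ with hX
  -- u κ lam ≤ #X
  have hmem : #X ∈ { c | ∃ X : Set (Set lam.out),
      (∀ x ∈ X, #x < κ) ∧
      (∀ b : Set lam.out, #b < κ → ∃ Q : Set (Set lam.out), Q ⊆ X ∧ #Q < ℵ₀ ∧ b ⊆ ⋃₀ Q) ∧
      #X = c } := by
    refine ⟨X, ?_, ?_, rfl⟩
    · rintro s ⟨x, hx, y, hy, rfl⟩
      have hinj : Set.InjOn (G x) (P x y) := (hG x (hX₂χ x hx)).mono inter_subset_left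
      calc #(P x y) = #(G x '' P x y) := (Cardinal.mk_image_eq_of_injOn _ _ hinj).symm
        _ ≤ #y := Cardinal.mk_le_mk_of_subset (by
              rintro - ⟨a, ⟨_, ha2⟩, rfl⟩; exact ha2)
        _ < κ := hX₁s y hy
    · intro b hb
      have hbχ : #b < Order.succ χ := lt_of_lt_of_le hb (hκχ.trans (Order.le_succ χ))
      obtain ⟨Q₂, hQ₂X, hQ₂f, hbQ₂⟩ := hX₂c b hbχ
      have hsub : ∀ x : Set lam.out, ∃ R : Set (Set χ.out),
          x ∈ Q₂ → R ⊆ X₁ ∧ #R < ℵ₀ ∧ G x '' (b ∩ x) ⊆ ⋃₀ R := by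
        intro x
        by_cases hx : x ∈ Q₂
        · have : #(G x '' (b ∩ x)) < κ :=
            lt_of_le_of_lt (Cardinal.mk_image_le.trans
              (Cardinal.mk_le_mk_of_subset inter_subset_left)) hb
          obtain ⟨R, hR1, hR2, hR3⟩ := hX₁c _ this
          exact ⟨R, fun _ => ⟨hR1, hR2, hR3⟩⟩
        · exact ⟨∅, fun h => absurd h hx⟩
      choose R hR using hsub
      refine ⟨⋃ x ∈ Q₂, (P x) '' R x, ?_, ?_, ?_⟩
      · rintro s hs
        simp only [mem_iUnion] at hs
        obtain ⟨x, hx, y, hy, rfl⟩ := hs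
        exact ⟨x, hQ₂X hx, y, (hR x hx).1 hy, rfl⟩
      · rw [Cardinal.lt_aleph0_iff_set_finite]
        refine Set.Finite.biUnion (Cardinal.lt_aleph0_iff_set_finite.mp hQ₂f) ?_
        intro x hx
        exact (Cardinal.lt_aleph0_iff_set_finite.mp (hR x hx).2.1).image _
      · intro a ha
        obtain ⟨x, hx, hax⟩ := hbQ₂ ha
        have : G x a ∈ ⋃₀ R x := (hR x hx).2.2 ⟨a, ⟨ha, hax⟩, rfl⟩
        obtain ⟨y, hy, hGy⟩ := this
        exact ⟨P x y, by simp only [mem_iUnion]; exact ⟨x, hx, y, hy, rfl⟩, hax, hGy⟩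
  have hle : u κ lam ≤ #X := csInf_le' hmem
  -- #X ≤ max
  have hcard : #X ≤ #X₂ * #X₁ := Cardinal.mk_image2_le
  -- u κ χ is infinite
  have hinf : ℵ₀ ≤ #X₁ := by
    by_contra h
    push_neg at h
    have hfin : X₁.Finite := Cardinal.lt_aleph0_iff_set_finite.mp h
    have huniv : (Set.univ : Set χ.out) ⊆ ⋃₀ X₁ := by
      intro α _
      have h1 : #({α} : Set χ.out) < κ := by
        simpa using lt_of_lt_of_le one_lt_aleph0 hω
      obtain ⟨Q, hQX, _, hQc⟩ := hX₁c _ h1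
      exact sUnion_subset_sUnion hQX (hQc rfl)
    have : χ ≤ #(⋃₀ X₁) := by
      calc χ = #(Set.univ : Set χ.out) := by rw [Cardinal.mk_univ, Cardinal.mk_out]
        _ ≤ #(⋃₀ X₁) := Cardinal.mk_le_mk_of_subset huniv
    have hlt : #(⋃₀ X₁) < κ := by
      refine lt_of_le_of_lt (Cardinal.mk_sUnion_le X₁) ?_
      refine Cardinal.mul_lt_of_lt hω (h.trans_le hω) ?_
      exact Cardinal.iSup_lt_of_isRegular hκreg (h.trans_le hω)
        (fun s => hX₁s s s.2)
    exact absurd (this.trans_lt hlt) (not_lt.mpr hκχ)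
  rw [hX₁m] at hinf
  have hmax : ℵ₀ ≤ max (u κ χ) (u (Order.succ χ) lam) := hinf.trans (le_max_left _ _)
  calc u κ lam ≤ #X := hle
    _ ≤ #X₂ * #X₁ := hcard
    _ = u (Order.succ χ) lam * u κ χ := by rw [hX₁m, hX₂m]; rfl
    _ ≤ max (u κ χ) (u (Order.succ χ) lam) * max (u κ χ) (u (Order.succ χ) lam) :=
        mul_le_mul' (le_max_right _ _) (le_max_left _ _)
    _ = max (u κ χ) (u (Order.succ χ) lam) := Cardinal.mul_eq_self hmax
end
end
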